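/- arXiv:1705.09218 — 5 statements merged into one kernel-verified Lean document; each statement's English description precedes it below -/
import Mathlib

section
/- If M1 and M2 are stable matchings for the same stable marriage instance, then the function assigning to each man the more-preferred (by him) of his two partners M1(m), M2(m) is again a stable matching (the lattice join), and similarly the function assigning to each man his less-preferred partner is a stable matching (the lattice meet). -/
/-- A stable-marriage instance with `n` men and `n` women: each man `m` ranks the
women via `mrank m` (lower rank = more preferred), each woman `w` ranks the men
via `wrank w`; rankings are strict, i.e. injective. -/
structure SMInst (n : ℕ) where
  mrank : Fin n → Fin n → ℕ
  wrank : Fin n → Fin n → ℕ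
  mrank_inj : ∀ m, Function.Injective (mrank m)
  wrank_inj : ∀ w, Function.Injective (wrank w)

namespace SMInst

variable {n : ℕ} (I : SMInst n)

/-- A matching is a bijection from men to women; the pair `(m, w)` blocks `M` if `m`
strictly prefers `w` to his partner `M m` and `w` strictly prefers `m` to her partner. -/
def Blocks (M : Fin n ≃ Fin n) (m w : Fin n) : Prop :=
  I.mrank m w < I.mrank m (M m) ∧ I.wrank w m < I.wrank w (M.symm w)

/-- A matching is stable iff it admits no blocking pair. -/
def IsStable (M : Fin n ≃ Fin n) : Prop :=
  ∀ m w, ¬ I.Blocks M m w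

/-- `M₁ ⪯ M₂` : every man weakly prefers his partner in `M₁` to his partner in `M₂`. -/
def Dominates (M₁ M₂ : Fin n ≃ Fin n) : Prop :=
  ∀ m, I.mrank m (M₁ m) ≤ I.mrank m (M₂ m)

/-- The man-optimal stable matching (the output of men-proposing Gale–Shapley):
stable and dominating every stable matching. -/
def IsManOptimal (M₀ : Fin n ≃ Fin n) : Prop :=
  I.IsStable M₀ ∧ ∀ M, I.IsStable M → I.Dominates M₀ M

/-- The woman-optimal (man-pessimal) stable matching. -/
def IsWomanOptimal (Mz : Fin n ≃ Fin n) : Prop :=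
  I.IsStable Mz ∧ ∀ M, I.IsStable M → I.Dominates M Mz

/-- `d(M, M')` : the number of men with different partners in `M` and `M'`. -/
def mdist (M M' : Fin n ≃ Fin n) : ℕ :=
  let _ := I
  (Finset.univ.filter fun m => M m ≠ M' m).card

/-- `L` is a rotation exposed in `M`: a cyclic list of at least two pairs `(mᵢ, wᵢ)` of `M`
with distinct men, such that `w_{i+1}` is the first woman strictly below `wᵢ` on `mᵢ`'s
list who prefers `mᵢ` to her `M`-partner. -/
def ExposedIn (M : Fin n ≃ Fin n) (L : List (Fin n × Fin n)) : Prop :=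
  2 ≤ L.length ∧ (L.map Prod.fst).Nodup ∧ (∀ p ∈ L, M p.1 = p.2) ∧
  ∀ i : Fin L.length,
    I.mrank (L.get i).1 (L.get i).2 <
      I.mrank (L.get i).1 (L.get ⟨(i.1 + 1) % L.length, Nat.mod_lt _ i.pos⟩).2 ∧
    I.wrank (L.get ⟨(i.1 + 1) % L.length, Nat.mod_lt _ i.pos⟩).2 (L.get i).1 <
      I.wrank (L.get ⟨(i.1 + 1) % L.length, Nat.mod_lt _ i.pos⟩).2
        (L.get ⟨(i.1 + 1) % L.length, Nat.mod_lt _ i.pos⟩).1 ∧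
    ∀ w, I.mrank (L.get i).1 (L.get i).2 < I.mrank (L.get i).1 w →
      I.mrank (L.get i).1 w <
        I.mrank (L.get i).1 (L.get ⟨(i.1 + 1) % L.length, Nat.mod_lt _ i.pos⟩).2 →
      ¬ I.wrank w (L.get i).1 < I.wrank w (M.symm w)

/-- `M'` is obtained from `M` by eliminating the rotation `L` exposed in `M`:
each man `mᵢ` of `L` moves to `w_{i+1}`, all other men keep their partners. -/
def Elim (M M' : Fin n ≃ Fin n) (L : List (Fin n × Fin n)) : Prop :=
  I.ExposedIn M L ∧
  (∀ i : Fin L.length,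
    M' (L.get i).1 = (L.get ⟨(i.1 + 1) % L.length, Nat.mod_lt _ i.pos⟩).2) ∧
  ∀ m : Fin n, m ∉ L.map Prod.fst → M' m = M m

/-- `ElimSeq M Ls M'` : applying the rotations of `Ls` in order starting from `M` yields `M'`. -/
def ElimSeq : (Fin n ≃ Fin n) → List (List (Fin n × Fin n)) → (Fin n ≃ Fin n) → Prop
  | M, [], M' => M' = M
  | M, L :: Ls, M' => ∃ Mmid, I.Elim M Mmid L ∧ ElimSeq Mmid Ls M'

/-- A rotation of the instance: a cyclic list exposed in some stable matching. -/
def IsRotation (L : List (Fin n × Fin n)) : Prop :=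
  ∃ M, I.IsStable M ∧ I.ExposedIn M L

/-- `ρ' ≪ ρ` : `ρ'` is eliminated in every sequence of rotation eliminations starting at
the man-optimal matching `M₀` and ending at a stable matching in which `ρ` is exposed.
(Rotations are identified up to their sets of pairs.) -/
def Precedes (L' L : List (Fin n × Fin n)) : Prop :=
  ∀ M₀ Ls M, I.IsManOptimal M₀ → I.ElimSeq M₀ Ls M → I.IsStable M → I.ExposedIn M L →
    ∃ K ∈ Ls, K.toFinset = L'.toFinset

/-- The rotation `L` produces the pair `(m, w)` : eliminating `L` matches `m` to `w`. -/
def Produces (L : List (Fin n × Fin n)) (m w : Fin n) : Prop :=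
  let _ := I
  ∃ i : Fin L.length,
    (L.get i).1 = m ∧ (L.get ⟨(i.1 + 1) % L.length, Nat.mod_lt _ i.pos⟩).2 = w

/-- The set of rotations of the instance, identified with their sets of pairs. -/
def RotSet : Set (Finset (Fin n × Fin n)) :=
  {R | ∃ L, I.IsRotation L ∧ L.toFinset = R}

/-- Precedence of rotations, on rotations-as-sets-of-pairs. -/
def PrecedesR (R' R : Finset (Fin n × Fin n)) : Prop :=
  ∃ L' L, I.IsRotation L' ∧ I.IsRotation L ∧ L'.toFinset = R' ∧ L.toFinset = R ∧
    I.Precedes L' L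

/-- Closed subsets (down-sets) of the rotation poset. -/
def IsClosedF (S : Finset (Finset (Fin n × Fin n))) : Prop :=
  (∀ R ∈ S, R ∈ I.RotSet) ∧ ∀ R ∈ S, ∀ R' ∈ I.RotSet, I.PrecedesR R' R → R' ∈ S

/-- `X(T)` : the set of men involved in at least one rotation of `T`. -/
def menOf (T : Finset (Finset (Fin n × Fin n))) : Finset (Fin n) :=
  let _ := I
  T.biUnion fun R => R.image Prod.fst

/-- The stable matching corresponding to the closed subset `S`: obtained from `M₀` by
eliminating the rotations of `S`, each exactly once, in some valid order. -/
def Corresponds (M₀ : Fin n ≃ Fin n) (S : Finset (Finset (Fin n × Fin n)))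
    (M : Fin n ≃ Fin n) : Prop :=
  ∃ Ls : List (List (Fin n × Fin n)),
    (Ls.map List.toFinset).Nodup ∧ (Ls.map List.toFinset).toFinset = S ∧
    I.ElimSeq M₀ Ls M

end SMInst

section Aux
variable {n : ℕ}

/-- Key lemma (man side): if `m` strictly prefers his `A`-partner `w = A m` to his
`B`-partner, then `w` strictly prefers her `B`-partner to `m` (else `(m,w)` blocks `B`). -/
lemma smKeyM (I : SMInst n) (A B : Fin n ≃ Fin n) (hB : I.IsStable B) (m : Fin n)
    (hm : I.mrank m (A m) < I.mrank m (B m)) :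
    I.wrank (A m) (B.symm (A m)) < I.wrank (A m) m := by
  have hne : B.symm (A m) ≠ m := by
    intro h
    have : A m = B m := by
      have := congrArg B h
      simpa using this
    rw [this] at hm
    exact lt_irrefl _ hm
  rcases lt_or_ge (I.wrank (A m) (B.symm (A m))) (I.wrank (A m) m) with h | h
  · exact h
  · exfalso
    have hlt : I.wrank (A m) m < I.wrank (A m) (B.symm (A m)) := by
      rcases lt_or_eq_of_le h with h' | h'
      · exact h'
      · exact absurd (I.wrank_inj (A m) h') (fun he => hne he.symm)
    exact hB m (A m) ⟨hm, hlt⟩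

/-- Key lemma (woman side): if `w` strictly prefers her `A`-partner `m = A.symm w` to her
`B`-partner, then `m` strictly prefers his `B`-partner to `w`. -/
lemma smKeyW (I : SMInst n) (A B : Fin n ≃ Fin n) (hB : I.IsStable B) (w : Fin n)
    (hw : I.wrank w (A.symm w) < I.wrank w (B.symm w)) :
    I.mrank (A.symm w) (B (A.symm w)) < I.mrank (A.symm w) w := by
  set m := A.symm w with hm
  have hAm : A m = w := by simp [hm]
  have hne : B m ≠ w := by
    intro h
    have : B.symm w = m := by
      rw [← h]; simp
    rw [this] at hw
    exact lt_irrefl _ hw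
  rcases lt_or_ge (I.mrank m (B m)) (I.mrank m w) with h | h
  · exact h
  · exfalso
    have hlt : I.mrank m w < I.mrank m (B m) := by
      rcases lt_or_eq_of_le h with h' | h'
      · exact h'
      · exact absurd (I.mrank_inj m h') (fun he => hne he.symm)
    exact hB m w ⟨hlt, hw⟩

end Aux

/-- the pointwise man-better (join) and man-worse (meet) of two stable
matchings are again (bijective) stable matchings. -/
theorem join_and_meet_stable {n : ℕ} (I : SMInst n) (M₁ M₂ : Fin n ≃ Fin n)
    (h₁ : I.IsStable M₁) (h₂ : I.IsStable M₂) :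
    (∃ Mj : Fin n ≃ Fin n,
      (∀ m, Mj m = if I.mrank m (M₁ m) ≤ I.mrank m (M₂ m) then M₁ m else M₂ m) ∧
      I.IsStable Mj) ∧
    (∃ Mm : Fin n ≃ Fin n,
      (∀ m, Mm m = if I.mrank m (M₁ m) ≤ I.mrank m (M₂ m) then M₂ m else M₁ m) ∧
      I.IsStable Mm) := by
  classical
  -- the pointwise join and meet functions, and the women-side better function
  set f : Fin n → Fin n :=
    fun m => if I.mrank m (M₁ m) ≤ I.mrank m (M₂ m) then M₁ m else M₂ m with hf
  set g : Fin n → Fin n :=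
    fun m => if I.mrank m (M₁ m) ≤ I.mrank m (M₂ m) then M₂ m else M₁ m with hg
  set h' : Fin n → Fin n :=
    fun w => if I.wrank w (M₁.symm w) ≤ I.wrank w (M₂.symm w) then M₁.symm w else M₂.symm w
    with hh'
  -- basic facts
  have mrank_eq : ∀ m {a b : Fin n}, I.mrank m a = I.mrank m b → a = b :=
    fun m a b h => I.mrank_inj m h
  have wrank_eq : ∀ w {a b : Fin n}, I.wrank w a = I.wrank w b → a = b :=
    fun w a b h => I.wrank_inj w h
  -- f is injective
  have finj : Function.Injective f := by
    intro a b hab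
    by_contra hne
    simp only [hf] at hab
    by_cases ha : I.mrank a (M₁ a) ≤ I.mrank a (M₂ a) <;>
      by_cases hb : I.mrank b (M₁ b) ≤ I.mrank b (M₂ b) <;>
      simp only [ha, hb, if_pos, if_neg, if_true, if_false] at hab
    · exact hne (M₁.injective hab)
    · -- w = M₁ a = M₂ b
      push_neg at hb
      set w := M₁ a with hw
      have hMb : M₂ b = w := hab.symm
      have haw : M₁.symm w = a := by simp [hw]
      have hbw : M₂.symm w = b := by rw [← hMb]; simp
      have hM2a : M₂ a ≠ w := by
        intro h
        have : M₂.symm w = a := by rw [← h]; simp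
        exact hne (this.symm.trans hbw)
      have hastrict : I.mrank a (M₁ a) < I.mrank a (M₂ a) := by
        rcases lt_or_eq_of_le ha with h | h
        · exact h
        · exact absurd (mrank_eq a h) (fun he => hM2a he.symm)
      rcases lt_trichotomy (I.wrank w a) (I.wrank w b) with h | h | h
      · -- (a, w) blocks M₂
        exact h₂ a w ⟨hastrict, by rw [hbw]; exact h⟩
      · exact hne (wrank_eq w h)
      · -- (b, w) blocks M₁
        have hbm : I.mrank b w < I.mrank b (M₁ b) := by rw [← hMb]; exact hb
        exact h₁ b w ⟨hbm, by rw [haw]; exact h⟩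
    · -- symmetric: w = M₂ a = M₁ b
      push_neg at ha
      set w := M₂ a with hw
      have hMb : M₁ b = w := hab.symm
      have haw : M₂.symm w = a := by simp [hw]
      have hbw : M₁.symm w = b := by rw [← hMb]; simp
      have hM1b : M₂ b ≠ w := by
        intro h
        have : M₂.symm w = b := by rw [← h]; simp
        exact hne (haw.symm.trans this)
      have hbstrict : I.mrank b (M₁ b) < I.mrank b (M₂ b) := by
        rcases lt_or_eq_of_le hb with h | h
        · exact h
        · exact absurd (mrank_eq b h) (fun he => hM1b (he.symm.trans hMb))
      rcases lt_trichotomy (I.wrank w a) (I.wrank w b) with h | h | h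
      · -- (a, w) blocks M₁
        exact h₁ a w ⟨ha, by rw [hbw]; exact h⟩
      · exact hne (wrank_eq w h)
      · -- (b, w) blocks M₂
        exact h₂ b w ⟨by rw [← hMb]; exact hbstrict, by rw [haw]; exact h⟩
    · exact hne (M₂.injective hab)
  -- h' is injective
  have h'inj : Function.Injective h' := by
    intro a b hab
    by_contra hne
    simp only [hh'] at hab
    by_cases ha : I.wrank a (M₁.symm a) ≤ I.wrank a (M₂.symm a) <;>
      by_cases hb : I.wrank b (M₁.symm b) ≤ I.wrank b (M₂.symm b) <;>
      simp only [ha, hb, if_pos, if_neg, if_true, if_false] at hab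
    · exact hne (M₁.symm.injective hab)
    · -- m = M₁.symm a = M₂.symm b
      push_neg at hb
      set m := M₁.symm a with hm
      have hmb : M₂.symm b = m := hab.symm
      have hM1a : M₁ m = a := by simp [hm]
      have hM2b : M₂ m = b := by rw [← hmb]; simp
      have hM2a : M₂.symm a ≠ m := by
        intro h
        have : M₂ m = a := by rw [← h]; simp
        exact hne (by rw [← hM2b, this])
      have hastrict : I.wrank a (M₁.symm a) < I.wrank a (M₂.symm a) := by
        rcases lt_or_eq_of_le ha with h | h
        · exact h
        · exact absurd (wrank_eq a h) (fun he => hM2a (he ▸ hm ▸ rfl))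
      have k1 := smKeyW I M₁ M₂ h₂ a hastrict
      have k2 := smKeyW I M₂ M₁ h₁ b hb
      rw [← hm, hM2b] at k1
      rw [hmb, hM1a] at k2
      -- k1 : I.mrank m b < I.mrank m a ; k2 : I.mrank m a < I.mrank m b
      exact absurd (k1.trans k2) (lt_irrefl _)
    · -- symmetric
      push_neg at ha
      set m := M₂.symm a with hm
      have hmb : M₁.symm b = m := hab.symm
      have hM2a : M₂ m = a := by simp [hm]
      have hM1b : M₁ m = b := by rw [← hmb]; simp
      have hM1a : M₁.symm a ≠ m := by
        intro h
        have : M₁ m = a := by rw [← h]; simp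
        exact hne (by rw [← hM1b, this])
      have hbstrict : I.wrank b (M₁.symm b) < I.wrank b (M₂.symm b) := by
        rcases lt_or_eq_of_le hb with h | h
        · exact h
        · exact absurd (wrank_eq b h)
            (fun he => hne (M₂.symm.injective (by rw [← hm, ← he, hmb])))
      have k1 := smKeyW I M₂ M₁ h₁ a ha
      have k2 := smKeyW I M₁ M₂ h₂ b hbstrict
      rw [← hm, hM1b] at k1
      rw [hmb, hM2a] at k2
      exact absurd (k1.trans k2) (lt_irrefl _)
    · exact hne (M₂.symm.injective hab)
  have h'surj : Function.Surjective h' := Finite.surjective_of_injective h'inj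
  -- h' ∘ g = id
  have h'g : ∀ m, h' (g m) = m := by
    intro m
    by_cases hc : I.mrank m (M₁ m) ≤ I.mrank m (M₂ m)
    · have hgm : g m = M₂ m := by simp [hg, hc]
      set w := M₂ m with hw
      have hwm : M₂.symm w = m := by simp [hw]
      by_cases heq : M₁ m = M₂ m
      · have : M₁.symm w = m := by rw [hw, ← heq]; simp
        simp [hh', hgm, ← hw, this, hwm]
      · have hstrict : I.mrank m (M₁ m) < I.mrank m (M₂ m) := by
          rcases lt_or_eq_of_le hc with h | h
          · exact h
          · exact absurd (mrank_eq m h) heq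
        have hM1w : M₁.symm w ≠ m := by
          intro h
          have h2 : M₁ m = w := by
            have := congrArg M₁ h
            simpa using this.symm
          exact heq (h2.trans hw)
        -- claim: w prefers m to M₁.symm w
        have hclaim : I.wrank w m < I.wrank w (M₁.symm w) := by
          by_contra hcon
          push_neg at hcon
          have hlt : I.wrank w (M₁.symm w) < I.wrank w m := by
            rcases lt_or_eq_of_le hcon with h | h
            · exact h
            · exact absurd (wrank_eq w h) hM1w
          -- find u with h' u = m; u must be M₁ m or M₂ m, both impossible
          obtain ⟨u, hu⟩ := h'surj m
          have hu' : u = M₁ m ∨ u = M₂ m := by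
            simp only [hh'] at hu
            by_cases hcu : I.wrank u (M₁.symm u) ≤ I.wrank u (M₂.symm u)
            · rw [if_pos hcu] at hu
              left; rw [← hu]; simp
            · rw [if_neg hcu] at hu
              right; rw [← hu]; simp
          rcases hu' with hu' | hu'
          · -- u = M₁ m : but M₁ m prefers M₂.symm (M₁ m) to m by smKeyM
            have k := smKeyM I M₁ M₂ h₂ m hstrict
            have hM2u : M₂.symm u ≠ m := by
              intro h
              exact heq (by rw [hu'] at h; have := congrArg M₂ h; simpa using this)
            simp only [hh'] at hu
            subst hu'
            have hM1u : M₁.symm (M₁ m) = m := by simp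
            by_cases hcu : I.wrank (M₁ m) (M₁.symm (M₁ m)) ≤ I.wrank (M₁ m) (M₂.symm (M₁ m))
            · rw [if_pos hcu] at hu
              rw [hM1u] at hcu
              exact absurd (lt_of_le_of_lt hcu k) (lt_irrefl _)
            · rw [if_neg hcu] at hu
              exact hM2u hu
          · -- u = M₂ m = w : then h' w = M₁.symm w ≠ m since w prefers M₁.symm w
            subst hu'
            rw [← hw] at hu
            simp only [hh'] at hu
            rw [hwm] at hu
            rw [if_pos (le_of_lt hlt)] at hu
            exact hM1w hu
        -- conclude h' w = m
        have : ¬ I.wrank w (M₁.symm w) ≤ I.wrank w (M₂.symm w) := by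
          rw [hwm]; push_neg; exact hclaim
        simp only [hgm, ← hw, hh', if_neg this]
        exact hwm
    · push_neg at hc
      have hgm : g m = M₁ m := by simp [hg, not_le.mpr hc]
      set w := M₁ m with hw
      have hwm : M₁.symm w = m := by simp [hw]
      have heq : M₁ m ≠ M₂ m := by
        intro h; rw [hw, h] at hc; exact lt_irrefl _ hc
      have hM2w : M₂.symm w ≠ m := by
        intro h
        exact heq (by have := congrArg M₂ h; rw [hw] at this; simpa using this)
      have hclaim : I.wrank w m < I.wrank w (M₂.symm w) := by
        by_contra hcon
        push_neg at hcon
        have hlt : I.wrank w (M₂.symm w) < I.wrank w m := by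
          rcases lt_or_eq_of_le hcon with h | h
          · exact h
          · exact absurd (wrank_eq w h) hM2w
        obtain ⟨u, hu⟩ := h'surj m
        have hu' : u = M₁ m ∨ u = M₂ m := by
          simp only [hh'] at hu
          by_cases hcu : I.wrank u (M₁.symm u) ≤ I.wrank u (M₂.symm u)
          · rw [if_pos hcu] at hu
            left; rw [← hu]; simp
          · rw [if_neg hcu] at hu
            right; rw [← hu]; simp
        rcases hu' with hu' | hu'
        · -- u = M₁ m = w : h' w = M₂.symm w ≠ m since w prefers M₂.symm w
          subst hu'
          rw [← hw] at hu
          simp only [hh'] at hu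
          rw [hwm] at hu
          rw [if_neg (not_le.mpr hlt)] at hu
          exact hM2w hu
        · -- u = M₂ m : M₂ m prefers M₁.symm (M₂ m) to m by smKeyM
          have k := smKeyM I M₂ M₁ h₁ m hc
          have hM1u : M₁.symm u ≠ m := by
            intro h
            exact heq (by rw [hu'] at h; have := congrArg M₁ h; simpa using this.symm)
          simp only [hh'] at hu
          subst hu'
          have hM2u : M₂.symm (M₂ m) = m := by simp
          by_cases hcu : I.wrank (M₂ m) (M₁.symm (M₂ m)) ≤ I.wrank (M₂ m) (M₂.symm (M₂ m))
          · rw [if_pos hcu] at hu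
            exact hM1u hu
          · push_neg at hcu
            rw [hM2u] at hcu
            exact absurd (hcu.trans k) (lt_irrefl _)
      have hle : I.wrank w (M₁.symm w) ≤ I.wrank w (M₂.symm w) := by
        rw [hwm]; exact le_of_lt hclaim
      simp only [hgm, ← hw, hh', if_pos hle]
      exact hwm
  have ginj : Function.Injective g := by
    intro a b hab
    have := congrArg h' hab
    rw [h'g a, h'g b] at this
    exact this
  -- build equivs
  let Mj : Fin n ≃ Fin n := Equiv.ofBijective f (Finite.injective_iff_bijective.mp finj)
  let Mm : Fin n ≃ Fin n := Equiv.ofBijective g (Finite.injective_iff_bijective.mp ginj)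
  have hMj : ∀ m, Mj m = f m := fun m => rfl
  have hMm : ∀ m, Mm m = g m := fun m => rfl
  constructor
  · refine ⟨Mj, fun m => rfl, ?_⟩
    intro m w hblk
    obtain ⟨hb1, hb2⟩ := hblk
    -- Mj m = f m, better of the two
    have hfle1 : I.mrank m (f m) ≤ I.mrank m (M₁ m) := by
      simp only [hf]; split
      · exact le_refl _
      · next h => exact le_of_lt (not_le.mp h)
    have hfle2 : I.mrank m (f m) ≤ I.mrank m (M₂ m) := by
      simp only [hf]; split
      · next h => exact h
      · exact le_refl _
    rw [hMj m] at hb1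
    -- Mj.symm w : f (Mj.symm w) = w
    set m' := Mj.symm w with hm'
    have hfm' : f m' = w := by
      have : Mj m' = w := by simp [hm']
      rw [← hMj]; exact this
    simp only [hf] at hfm'
    by_cases hc : I.mrank m' (M₁ m') ≤ I.mrank m' (M₂ m')
    · rw [if_pos hc] at hfm'
      have hsymm : M₁.symm w = m' := by rw [← hfm']; simp
      exact h₁ m w ⟨lt_of_lt_of_le hb1 hfle1, by rw [hsymm]; exact hb2⟩
    · rw [if_neg hc] at hfm'
      have hsymm : M₂.symm w = m' := by rw [← hfm']; simp
      exact h₂ m w ⟨lt_of_lt_of_le hb1 hfle2, by rw [hsymm]; exact hb2⟩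
  · refine ⟨Mm, fun m => rfl, ?_⟩
    intro m w hblk
    obtain ⟨hb1, hb2⟩ := hblk
    rw [hMm m] at hb1
    set m' := Mm.symm w with hm'
    have hgm' : g m' = w := by
      have : Mm m' = w := by simp [hm']
      rw [← hMm]; exact this
    -- wrank w m < wrank w m' and m' = h' w is w's better partner, so
    -- wrank w m < wrank w (Mᵢ.symm w) for both i.
    have hh'w : h' w = m' := by rw [← hgm', h'g]
    have hwle1 : I.wrank w (h' w) ≤ I.wrank w (M₁.symm w) := by
      simp only [hh']; split
      · exact le_refl _
      · next h => exact le_of_lt (not_le.mp h)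
    have hwle2 : I.wrank w (h' w) ≤ I.wrank w (M₂.symm w) := by
      simp only [hh']; split
      · next h => exact h
      · exact le_refl _
    rw [hh'w] at hwle1 hwle2
    -- g m = Mᵢ m for some i with mrank m w < mrank m (g m)
    simp only [hg] at hb1
    by_cases hc : I.mrank m (M₁ m) ≤ I.mrank m (M₂ m)
    · rw [if_pos hc] at hb1
      exact h₂ m w ⟨hb1, lt_of_lt_of_le hb2 hwle2⟩
    · rw [if_neg hc] at hb1
      exact h₁ m w ⟨hb1, lt_of_lt_of_le hb2 hwle1⟩
end

section
/- Under the man-optimal dominance order on stable matchings, the man-optimal stable matching M0 is the least element: M0 ⪯ M for every stable matching M. Equivalently, each man receives his best achievable stable partner in M0. -/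
/-! ### Auxiliary development: Gale–Shapley via proposal indices -/

section GS

variable {n : ℕ} (I : SMInst n)

/-- `gsPref I m k` : man `m`'s `k`-th favorite woman. -/
noncomputable def gsPref (m : Fin n) : Equiv.Perm (Fin n) := Tuple.sort (I.mrank m)

lemma gsPref_strictMono (m : Fin n) :
    StrictMono fun k => I.mrank m (gsPref I m k) :=
  (Tuple.monotone_sort (I.mrank m)).strictMono_of_injective
    ((I.mrank_inj m).comp (gsPref I m).injective)

lemma gs_rank_lt_iff (m w : Fin n) (k : Fin n) :
    I.mrank m w < I.mrank m (gsPref I m k) ↔ (gsPref I m).symm w < k := by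
  conv_lhs => rw [show w = gsPref I m ((gsPref I m).symm w) from
    (Equiv.apply_symm_apply _ _).symm]
  exact (gsPref_strictMono I m).lt_iff_lt

/-- The Gale–Shapley invariant for a vector of proposal indices `f`:
every woman a man has already been rejected by is currently proposed to by a
man she strictly prefers, and is not a stable partner of the rejected man. -/
def GSInv (f : Fin n → Fin n) : Prop :=
  ∀ m j : Fin n, j < f m →
    (∃ m', gsPref I m' (f m') = gsPref I m j ∧
      I.wrank (gsPref I m j) m' < I.wrank (gsPref I m j) m) ∧
    ∀ M : Fin n ≃ Fin n, I.IsStable M → M m ≠ gsPref I m j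

lemma gs_step_core (f : Fin n → Fin n) (hf : GSInv I f) (m₁ m₂ : Fin n)
    (hne : m₂ ≠ m₁) (hw : gsPref I m₂ (f m₂) = gsPref I m₁ (f m₁))
    (hlt : I.wrank (gsPref I m₁ (f m₁)) m₂ < I.wrank (gsPref I m₁ (f m₁)) m₁) :
    ∃ g : Fin n → Fin n, GSInv I g ∧
      (∑ m, (f m).val) + 1 = ∑ m, (g m).val := by
  set w := gsPref I m₁ (f m₁) with hwdef
  -- overflow safety
  have hov : (f m₁).val + 1 < n := by
    by_contra hov
    push_neg at hov
    have hall : ∀ j : Fin n, j ≤ f m₁ := by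
      intro j
      have := j.isLt
      exact Fin.le_def.mpr (by omega)
    have hwit : ∀ w' : Fin n, ∃ m', gsPref I m' (f m') = w' ∧
        I.wrank w' m' < I.wrank w' m₁ := by
      intro w'
      set j := (gsPref I m₁).symm w' with hj
      have hw' : gsPref I m₁ j = w' := Equiv.apply_symm_apply _ _
      rcases lt_or_eq_of_le (hall j) with h | h
      · obtain ⟨⟨m', hp, hr⟩, -⟩ := hf m₁ j h
        exact ⟨m', by rwa [hw'] at hp, by rwa [hw'] at hr⟩
      · refine ⟨m₂, ?_, ?_⟩
        · rw [hw, hwdef, ← h]; exact hw'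
        · rw [← hw', h]; exact hlt
    choose wit hwit1 hwit2 using hwit
    have hinj : Function.Injective wit := by
      intro a b hab
      rw [← hwit1 a, ← hwit1 b, hab]
    have hsurj := Finite.injective_iff_surjective.mp hinj
    obtain ⟨w', hw'⟩ := hsurj m₁
    have := hwit2 w'
    rw [hw'] at this
    exact absurd this (lt_irrefl _)
  -- the new state
  set g : Fin n → Fin n := Function.update f m₁ ⟨(f m₁).val + 1, hov⟩ with hg
  have hg1 : g m₁ = ⟨(f m₁).val + 1, hov⟩ := Function.update_self _ _ _
  have hg2 : ∀ m, m ≠ m₁ → g m = f m := fun m hm => Function.update_of_ne hm _ _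
  refine ⟨g, ?_, ?_⟩
  · -- invariant preserved
    intro m j hj
    by_cases hm : m = m₁
    · subst hm
      rw [hg1, Fin.lt_def] at hj
      simp only at hj
      rcases Nat.lt_or_ge j.val (f m).val with h | h
      · -- j was already rejected before
        obtain ⟨⟨m', hp, hr⟩, hst⟩ := hf m j (Fin.lt_def.mpr h)
        have hm' : m' ≠ m := fun e => by rw [e] at hr; exact lt_irrefl _ hr
        exact ⟨⟨m', by rw [hg2 m' hm']; exact hp, hr⟩, hst⟩
      · -- j = f m : the new rejection
        have hj' : j = f m := Fin.le_antisymm (Fin.le_def.mpr (by omega)) (Fin.le_def.mpr h)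
        subst hj'
        constructor
        · exact ⟨m₂, by rw [hg2 m₂ hne]; exact hw, hlt⟩
        · intro M hM heq
          refine hM m₂ w ⟨?_, ?_⟩
          · -- m₂ strictly prefers w to M m₂
            set k := (gsPref I m₂).symm (M m₂) with hk
            have hMk : gsPref I m₂ k = M m₂ := Equiv.apply_symm_apply _ _
            have hknlt : ¬ k < f m₂ := by
              intro hklt
              exact (hf m₂ k hklt).2 M hM hMk.symm
            have hkne : k ≠ f m₂ := by
              intro e
              have : M m₂ = w := by rw [← hMk, e, hw]
              exact hne (M.injective (this.trans heq.symm))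
            have hfk : f m₂ < k := lt_of_le_of_ne (not_lt.mp hknlt) (Ne.symm hkne)
            have h5 : I.mrank m₂ (gsPref I m₂ (f m₂)) < I.mrank m₂ (gsPref I m₂ k) :=
              gsPref_strictMono I m₂ hfk
            rw [hMk, hw] at h5
            exact h5
          · -- w strictly prefers m₂ to her M-partner m₁
            have : M.symm w = m := by
              rw [Equiv.symm_apply_eq, hwdef]; exact heq.symm
            rw [this]; exact hlt
    · rw [hg2 m hm] at hj
      obtain ⟨⟨m', hp, hr⟩, hst⟩ := hf m j hj
      refine ⟨?_, hst⟩
      by_cases hm' : m' = m₁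
      · subst hm'
        have hww : gsPref I m j = w := hp.symm
        refine ⟨m₂, ?_, ?_⟩
        · rw [hg2 m₂ hne, hw]; exact hww.symm
        · rw [hww]; rw [hww] at hr; exact hlt.trans hr
      · exact ⟨m', by rw [hg2 m' hm']; exact hp, hr⟩
  · -- sum increases by one
    have : ∀ m, (g m).val = (f m).val + if m = m₁ then 1 else 0 := by
      intro m
      by_cases hm : m = m₁
      · subst hm; rw [hg1]; simp
      · rw [hg2 m hm]; simp [hm]
    simp only [this, Finset.sum_add_distrib, Finset.sum_ite_eq' Finset.univ m₁,
      Finset.mem_univ, if_true]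

lemma gs_step (f : Fin n → Fin n) (hf : GSInv I f)
    (hnt : ¬ Function.Injective fun m => gsPref I m (f m)) :
    ∃ g : Fin n → Fin n, GSInv I g ∧
      (∑ m, (f m).val) + 1 = ∑ m, (g m).val := by
  rw [Function.not_injective_iff] at hnt
  obtain ⟨a, b, hab, hne⟩ := hnt
  have hr : I.wrank (gsPref I a (f a)) a ≠ I.wrank (gsPref I a (f a)) b :=
    fun e => hne (I.wrank_inj _ e)
  rcases hr.lt_or_gt with h | h
  · exact gs_step_core I f hf b a hne hab (hab ▸ h)
  · exact gs_step_core I f hf a b (Ne.symm hne) hab.symm h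

lemma gs_sum_lt (f : Fin n → Fin n)
    (hnt : ¬ Function.Injective fun m => gsPref I m (f m)) :
    (∑ m, (f m).val) < n * n := by
  have hn : 0 < n := by
    rcases Nat.eq_zero_or_pos n with h | h
    · exfalso; apply hnt; intro a; exact absurd a.isLt (by omega)
    · exact h
  have h1 : (∑ m : Fin n, (f m).val) ≤ ∑ _m : Fin n, (n - 1) :=
    Finset.sum_le_sum fun m _ => by have := (f m).isLt; omega
  have h2 : (∑ _m : Fin n, (n - 1)) = n * (n - 1) := by
    rw [Finset.sum_const, Finset.card_univ, Fintype.card_fin, smul_eq_mul]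
  have : n * (n - 1) < n * n :=
    mul_lt_mul_of_pos_left (by omega) hn
  omega

lemma gs_loop : ∀ (K : ℕ) (f : Fin n → Fin n), n * n ≤ (∑ m, (f m).val) + K →
    GSInv I f → ∃ g : Fin n → Fin n, GSInv I g ∧
      Function.Injective fun m => gsPref I m (g m) := by
  intro K
  induction K with
  | zero =>
    intro f hK hf
    refine ⟨f, hf, ?_⟩
    by_contra hnt
    exact absurd hK (by have := gs_sum_lt I f hnt; omega)
  | succ K ih =>
    intro f hK hf
    by_cases hnt : Function.Injective fun m => gsPref I m (f m)
    · exact ⟨f, hf, hnt⟩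
    · obtain ⟨g, hg, hsum⟩ := gs_step I f hf hnt
      exact ih g (by omega) hg

end GS

/-- there is a man-optimal stable matching `M₀`, the least element of the
dominance order: it is stable, dominates every stable matching, and gives every man his
best achievable stable partner. -/
theorem man_optimal_is_least {n : ℕ} (I : SMInst n) :
    ∃ M₀ : Fin n ≃ Fin n, I.IsStable M₀ ∧
      (∀ M : Fin n ≃ Fin n, I.IsStable M → I.Dominates M₀ M) ∧
      ∀ m w : Fin n, (∃ M : Fin n ≃ Fin n, I.IsStable M ∧ M m = w) →
        I.mrank m (M₀ m) ≤ I.mrank m w := by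
  obtain ⟨f₀, hf₀⟩ : ∃ f : Fin n → Fin n, GSInv I f := by
    rcases Nat.eq_zero_or_pos n with h | h
    · subst h; exact ⟨id, fun m => m.elim0⟩
    · exact ⟨fun _ => ⟨0, h⟩, fun m j hj => by simp [Fin.lt_def] at hj⟩
  obtain ⟨g, hg, hinj⟩ := gs_loop I (n * n) f₀ (by omega) hf₀
  have hbij := Finite.injective_iff_bijective.mp hinj
  set M₀ : Fin n ≃ Fin n := Equiv.ofBijective _ hbij with hM₀
  have hM₀app : ∀ m, M₀ m = gsPref I m (g m) := fun m => rfl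
  have hdom : ∀ M : Fin n ≃ Fin n, I.IsStable M → I.Dominates M₀ M := by
    intro M hM m
    set k := (gsPref I m).symm (M m) with hk
    have hMk : gsPref I m k = M m := Equiv.apply_symm_apply _ _
    have hnlt : ¬ k < g m := fun h => (hg m k h).2 M hM hMk.symm
    have := (gsPref_strictMono I m).monotone (not_lt.mp hnlt)
    rw [hMk] at this
    rw [hM₀app]
    exact this
  refine ⟨M₀, ?_, hdom, ?_⟩
  · rintro m w ⟨h1, h2⟩
    rw [hM₀app] at h1
    have hjlt : (gsPref I m).symm w < g m := (gs_rank_lt_iff I m w (g m)).mp h1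
    obtain ⟨⟨m', hp, hr⟩, -⟩ := hg m ((gsPref I m).symm w) hjlt
    rw [Equiv.apply_symm_apply] at hp hr
    have hsymm : M₀.symm w = m' := by
      rw [Equiv.symm_apply_eq, hM₀app, hp]
    rw [hsymm] at h2
    exact lt_asymm h2 hr
  · rintro m w ⟨M, hM, rfl⟩
    exact hdom M hM m
end

section
/- If M1 ⪯ M2 are distinct stable matchings (every man weakly prefers M1, and M1 ≠ M2), then every woman who has different partners in M1 and M2 strictly prefers her partner in M2 to her partner in M1. In particular, the dominance order for men is the reverse of the dominance order for women. -/
/-- if `M₁ ⪯ M₂` are distinct stable matchings then every woman with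
different partners strictly prefers her `M₂`-partner; in particular every woman weakly
prefers her `M₂`-partner, i.e. the women's dominance order is reversed. -/
theorem women_prefer_dominated {n : ℕ} (I : SMInst n) (M₁ M₂ : Fin n ≃ Fin n)
    (h₁ : I.IsStable M₁) (h₂ : I.IsStable M₂)
    (hdom : I.Dominates M₁ M₂) (hne : M₁ ≠ M₂) :
    (∀ w : Fin n, M₁.symm w ≠ M₂.symm w →
      I.wrank w (M₂.symm w) < I.wrank w (M₁.symm w)) ∧
    ∀ w : Fin n, I.wrank w (M₂.symm w) ≤ I.wrank w (M₁.symm w) := by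
  have key : ∀ w : Fin n, M₁.symm w ≠ M₂.symm w →
      I.wrank w (M₂.symm w) < I.wrank w (M₁.symm w) := by
    intro w hw
    set m' := M₁.symm w with hm'
    have hM₁m' : M₁ m' = w := M₁.apply_symm_apply w
    have hM₂m' : M₂ m' ≠ w := by
      intro h
      exact hw (by rw [← h, M₂.symm_apply_apply])
    -- m' strictly prefers w = M₁ m' to M₂ m'
    have hpref : I.mrank m' w < I.mrank m' (M₂ m') := by
      have hle := hdom m'
      rw [hM₁m'] at hle
      rcases lt_or_eq_of_le hle with h | h
      · exact h
      · exact absurd (I.mrank_inj m' h.symm) hM₂m'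
    -- (m', w) doesn't block M₂
    have hnb := h₂ m' w
    unfold SMInst.Blocks at hnb
    push_neg at hnb
    have hge := hnb hpref
    have hne' : M₂.symm w ≠ m' := fun h => hw (h ▸ rfl)
    rcases lt_or_eq_of_le hge with h | h
    · exact h
    · exact absurd (I.wrank_inj w h) hne'
  refine ⟨key, fun w => ?_⟩
  by_cases hw : M₁.symm w = M₂.symm w
  · rw [hw]
  · exact le_of_lt (key w hw)
end

section
/- Two incomparable rotations involve disjoint sets of men: if ρ and ρ' are rotations of a stable marriage instance such that neither precedes the other in the rotation poset, then the set of men appearing in pairs of ρ is disjoint from the set of men appearing in pairs of ρ'. -/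
section Aux
namespace SMInst

variable {n : ℕ} {I : SMInst n} {A N M M' S : Fin n ≃ Fin n}

lemma mrank_lt_of_ne {m a b : Fin n} (h : a ≠ b) (hle : I.mrank m a ≤ I.mrank m b) :
    I.mrank m a < I.mrank m b :=
  lt_of_le_of_ne hle fun he => h (I.mrank_inj m he)

lemma wrank_lt_of_ne {w a b : Fin n} (h : a ≠ b) (hle : I.wrank w a ≤ I.wrank w b) :
    I.wrank w a < I.wrank w b :=
  lt_of_le_of_ne hle fun he => h (I.wrank_inj w he)

lemma stable_wle (hM : I.IsStable M) {m w : Fin n} (h : I.mrank m w < I.mrank m (M m)) :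
    I.wrank w (M.symm w) ≤ I.wrank w m :=
  le_of_not_gt fun hw => hM m w ⟨h, hw⟩

lemma stable_mle (hM : I.IsStable M) {m w : Fin n} (h : I.wrank w m < I.wrank w (M.symm w)) :
    I.mrank m (M m) ≤ I.mrank m w :=
  le_of_not_gt fun hm => hM m w ⟨hm, h⟩

/-- each man's better partner among two stable matchings -/
def meetFun (I : SMInst n) (A N : Fin n ≃ Fin n) : Fin n → Fin n := fun m =>
  if I.mrank m (A m) ≤ I.mrank m (N m) then A m else N m

lemma meetFun_le_A (m : Fin n) : I.mrank m (meetFun I A N m) ≤ I.mrank m (A m) := by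
  unfold meetFun; split <;> omega

lemma meetFun_le_N (m : Fin n) : I.mrank m (meetFun I A N m) ≤ I.mrank m (N m) := by
  unfold meetFun; split <;> omega

lemma meetFun_choice (m : Fin n) : meetFun I A N m = A m ∨ meetFun I A N m = N m := by
  unfold meetFun; split <;> simp

lemma meetFun_aux (hA : I.IsStable A) (hN : I.IsStable N) {m1 m2 : Fin n}
    (h1 : I.mrank m1 (A m1) ≤ I.mrank m1 (N m1))
    (h2 : ¬ I.mrank m2 (A m2) ≤ I.mrank m2 (N m2))
    (hx : A m1 = N m2) : m1 = m2 := by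
  by_contra hne
  have hNne : N m1 ≠ A m1 := fun h => hne (N.injective (h.trans hx))
  have h1' : I.mrank m1 (A m1) < I.mrank m1 (N m1) := mrank_lt_of_ne (Ne.symm hNne) h1
  have hw1 : I.wrank (A m1) m2 ≤ I.wrank (A m1) m1 := by
    have := stable_wle hN (m := m1) (w := A m1) h1'
    rwa [show N.symm (A m1) = m2 by rw [hx, Equiv.symm_apply_apply]] at this
  have h2' : I.mrank m2 (N m2) < I.mrank m2 (A m2) := lt_of_not_ge h2
  have hw2 : I.wrank (A m1) m1 ≤ I.wrank (A m1) m2 := by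
    have := stable_wle hA (m := m2) (w := N m2) h2'
    rwa [← hx, Equiv.symm_apply_apply] at this
  exact hne (I.wrank_inj (A m1) (le_antisymm hw2 hw1))

lemma meetFun_inj (hA : I.IsStable A) (hN : I.IsStable N) :
    Function.Injective (meetFun I A N) := by
  intro m1 m2 h
  unfold meetFun at h
  split_ifs at h with c1 c2 c2
  · exact A.injective h
  · exact meetFun_aux hA hN c1 c2 h
  · exact (meetFun_aux hA hN c2 c1 h.symm).symm
  · exact N.injective h

noncomputable def meetEquiv (hA : I.IsStable A) (hN : I.IsStable N) : Fin n ≃ Fin n :=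
  Equiv.ofBijective _ (Finite.injective_iff_bijective.mp (meetFun_inj hA hN))

lemma meetEquiv_apply (hA : I.IsStable A) (hN : I.IsStable N) (m : Fin n) :
    meetEquiv hA hN m = meetFun I A N m := rfl

lemma meetEquiv_stable (hA : I.IsStable A) (hN : I.IsStable N) :
    I.IsStable (meetEquiv hA hN) := by
  intro x y hb
  obtain ⟨h1, h2⟩ := hb
  set B := meetEquiv hA hN with hB
  have hz : meetFun I A N (B.symm y) = y := B.apply_symm_apply y
  rcases meetFun_choice (I := I) (A := A) (N := N) (B.symm y) with hc | hc
  · rw [hc] at hz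
    exact hA x y ⟨lt_of_lt_of_le h1 (meetFun_le_A x),
      by rwa [A.symm_apply_eq.mpr hz.symm]⟩
  · rw [hc] at hz
    exact hN x y ⟨lt_of_lt_of_le h1 (meetFun_le_N x),
      by rwa [N.symm_apply_eq.mpr hz.symm]⟩

end SMInst
end Aux
section Aux2
namespace SMInst

variable {n : ℕ} {I : SMInst n} {A N M M' S : Fin n ≃ Fin n}

/-- each man's worse partner among two stable matchings -/
def joinFun (I : SMInst n) (A N : Fin n ≃ Fin n) : Fin n → Fin n := fun m =>
  if I.mrank m (A m) ≤ I.mrank m (N m) then N m else A m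

lemma joinFun_ge_A (m : Fin n) : I.mrank m (A m) ≤ I.mrank m (joinFun I A N m) := by
  unfold joinFun; split <;> omega

lemma joinFun_ge_N (m : Fin n) : I.mrank m (N m) ≤ I.mrank m (joinFun I A N m) := by
  unfold joinFun; split <;> omega

lemma joinFun_choice (m : Fin n) : joinFun I A N m = A m ∨ joinFun I A N m = N m := by
  unfold joinFun; split <;> simp

lemma joinFun_inj (hA : I.IsStable A) (hN : I.IsStable N) :
    Function.Injective (joinFun I A N) := by
  intro m1 m2 h
  set B := meetEquiv hA hN with hBdef
  unfold joinFun at h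
  split_ifs at h with c1 c2 c2
  · exact N.injective h
  · -- h : N m1 = A m2, c1 : A better-or-eq for m1, c2 : N strictly better for m2
    have hz : meetFun I A N (B.symm (N m1)) = N m1 := B.apply_symm_apply (N m1)
    rcases meetFun_choice (I := I) (A := A) (N := N) (B.symm (N m1)) with hc | hc
    · have hz' : A (B.symm (N m1)) = N m1 := hc.symm.trans hz
      have hzm2 : B.symm (N m1) = m2 := A.injective (by rw [hz', h])
      have hc2 : meetFun I A N m2 = N m2 := by unfold meetFun; rw [if_neg c2]
      have hz2 : I.meetFun A N m2 = N m1 := by rw [← hzm2]; exact hz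
      have h1 : N m2 = N m1 := hc2.symm.trans hz2
      have h2 : A m2 = N m2 := by rw [h1, h]
      exact absurd (le_of_eq (congrArg (I.mrank m2) h2)) c2
    · have hz' : N (B.symm (N m1)) = N m1 := hc.symm.trans hz
      have hzm1 : B.symm (N m1) = m1 := N.injective hz'
      have hm1 : meetFun I A N m1 = A m1 := by unfold meetFun; rw [if_pos c1]
      have hz2 := hz
      rw [hzm1] at hz2
      have h1 : A m1 = N m1 := hm1.symm.trans hz2
      exact A.injective (by rw [h1, h])
  · -- h : A m1 = N m2, ¬c1, c2
    have hz : meetFun I A N (B.symm (A m1)) = A m1 := B.apply_symm_apply (A m1)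
    rcases meetFun_choice (I := I) (A := A) (N := N) (B.symm (A m1)) with hc | hc
    · have hz' : A (B.symm (A m1)) = A m1 := hc.symm.trans hz
      have hzm1 : B.symm (A m1) = m1 := A.injective hz'
      have hm1 : meetFun I A N m1 = N m1 := by unfold meetFun; rw [if_neg c1]
      have hz2 := hz
      rw [hzm1] at hz2
      have h1 : N m1 = A m1 := hm1.symm.trans hz2
      exact absurd (le_of_eq (congrArg (I.mrank m1) h1.symm)) c1
    · have hz' : N (B.symm (A m1)) = A m1 := hc.symm.trans hz
      have hzm2 : B.symm (A m1) = m2 := N.injective (by rw [hz', h])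
      have hm2 : meetFun I A N m2 = A m2 := by unfold meetFun; rw [if_pos c2]
      have hz2 := hz
      rw [hzm2] at hz2
      have h1 : A m2 = A m1 := hm2.symm.trans hz2
      exact (A.injective h1).symm
  · exact A.injective h

noncomputable def joinEquiv (hA : I.IsStable A) (hN : I.IsStable N) : Fin n ≃ Fin n :=
  Equiv.ofBijective _ (Finite.injective_iff_bijective.mp (joinFun_inj hA hN))

lemma joinEquiv_apply (hA : I.IsStable A) (hN : I.IsStable N) (m : Fin n) :
    joinEquiv hA hN m = joinFun I A N m := rfl

lemma joinEquiv_women (hA : I.IsStable A) (hN : I.IsStable N) (y : Fin n) :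
    I.wrank y ((joinEquiv hA hN).symm y) ≤ I.wrank y (A.symm y) ∧
    I.wrank y ((joinEquiv hA hN).symm y) ≤ I.wrank y (N.symm y) := by
  set C := joinEquiv hA hN with hCdef
  have hz : joinFun I A N (C.symm y) = y := C.apply_symm_apply y
  rcases joinFun_choice (I := I) (A := A) (N := N) (C.symm y) with hc | hc
  · rw [hc] at hz
    have hAy : A.symm y = C.symm y := A.symm_apply_eq.mpr hz.symm
    refine ⟨by rw [hAy], ?_⟩
    rw [← hAy]
    by_contra hlt
    push_neg at hlt
    set b := N.symm y with hb
    have hNb : N b = y := N.apply_symm_apply y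
    have hba : b ≠ A.symm y := fun h => by rw [h] at hlt; exact lt_irrefl _ hlt
    by_cases hmb : I.mrank b y < I.mrank b (A b)
    · exact hA b y ⟨hmb, hlt⟩
    · push_neg at hmb
      have hAbne : A b ≠ y := fun h => hba (A.symm_apply_eq.mpr h.symm).symm
      have hmb' : I.mrank b (A b) < I.mrank b y := mrank_lt_of_ne hAbne hmb
      have : joinFun I A N b = y := by
        unfold joinFun; rw [if_pos (by rw [hNb]; exact le_of_lt hmb')]; exact hNb
      have := joinFun_inj hA hN (a₁ := b) (a₂ := C.symm y) (by rw [this]; exact (C.apply_symm_apply y).symm)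
      exact hba (by rw [this, hAy])
  · rw [hc] at hz
    have hNy : N.symm y = C.symm y := N.symm_apply_eq.mpr hz.symm
    refine ⟨?_, by rw [hNy]⟩
    rw [← hNy]
    by_contra hlt
    push_neg at hlt
    set a := A.symm y with ha
    have hAa : A a = y := A.apply_symm_apply y
    have hab : a ≠ N.symm y := fun h => by rw [h] at hlt; exact lt_irrefl _ hlt
    by_cases hma : I.mrank a y < I.mrank a (N a)
    · exact hN a y ⟨hma, hlt⟩
    · push_neg at hma
      have hNane : N a ≠ y := fun h => hab (N.symm_apply_eq.mpr h.symm).symm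
      have hma' : I.mrank a (N a) < I.mrank a y := mrank_lt_of_ne hNane hma
      have : joinFun I A N a = y := by
        unfold joinFun; rw [if_neg (by rw [hAa]; omega)]; exact hAa
      have := joinFun_inj hA hN (a₁ := a) (a₂ := C.symm y) (by rw [this]; exact (C.apply_symm_apply y).symm)
      exact hab (by rw [this, hNy])

lemma joinEquiv_stable (hA : I.IsStable A) (hN : I.IsStable N) :
    I.IsStable (joinEquiv hA hN) := by
  intro x y hb
  obtain ⟨h1, h2⟩ := hb
  rcases joinFun_choice (I := I) (A := A) (N := N) x with hc | hc
  · exact hA x y ⟨by rw [← hc]; exact h1, lt_of_lt_of_le h2 (joinEquiv_women hA hN y).1⟩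
  · exact hN x y ⟨by rw [← hc]; exact h1, lt_of_lt_of_le h2 (joinEquiv_women hA hN y).2⟩

lemma dom_women (hM : I.IsStable M) (hM' : I.IsStable M')
    (hdom : ∀ m, I.mrank m (M m) ≤ I.mrank m (M' m)) (y : Fin n) :
    I.wrank y (M'.symm y) ≤ I.wrank y (M.symm y) := by
  set m := M.symm y with hm
  have hMm : M m = y := M.apply_symm_apply y
  by_cases h : M' m = y
  · rw [M'.symm_apply_eq.mpr h.symm]
  · have : I.mrank m y < I.mrank m (M' m) := by
      refine mrank_lt_of_ne (fun he => h he.symm) ?_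
      rw [← hMm]; exact hdom m
    exact stable_wle hM' this

lemma star1 (hS : I.IsStable S) (hM : I.IsStable M) {m x : Fin n} (hSm : S m = x)
    (h : I.mrank m (M m) ≤ I.mrank m x) : I.wrank x m ≤ I.wrank x (M.symm x) := by
  set C := joinEquiv hM hS with hCdef
  have hCm : C m = x := by
    rw [joinEquiv_apply]; unfold joinFun; rw [if_pos (by rw [hSm]; exact h)]; exact hSm
  have := dom_women hM (joinEquiv_stable hM hS) (fun z => joinFun_ge_A z) x
  rwa [C.symm_apply_eq.mpr hCm.symm] at this

lemma star2 (hS : I.IsStable S) (hM : I.IsStable M) {m x : Fin n} (hSm : S m = x)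
    (h : I.mrank m x ≤ I.mrank m (M m)) : I.wrank x (M.symm x) ≤ I.wrank x m := by
  by_cases hMx : M m = x
  · rw [M.symm_apply_eq.mpr hMx.symm]
  · have hlt : I.mrank m x < I.mrank m (M m) := mrank_lt_of_ne (fun he => hMx he.symm) h
    set B := meetEquiv hM hS with hBdef
    have hBm : B m = x := by
      rw [meetEquiv_apply]; unfold meetFun
      rw [if_neg (by rw [hSm]; omega)]; exact hSm
    have := dom_women (meetEquiv_stable hM hS) hM (fun z => meetFun_le_A z) x
    rwa [B.symm_apply_eq.mpr hBm.symm] at this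

lemma trich (hS : I.IsStable S) (hM : I.IsStable M) {m x : Fin n} (hSm : S m = x) :
    (I.wrank x m < I.wrank x (M.symm x) ↔ I.mrank m (M m) < I.mrank m x) := by
  constructor
  · intro h
    by_contra hc
    push_neg at hc
    exact absurd h (not_lt_of_ge (star2 hS hM hSm hc))
  · intro h
    have hle := star1 hS hM hSm (le_of_lt h)
    refine lt_of_le_of_ne hle fun he => ?_
    have hsym : m = M.symm x := I.wrank_inj x he
    have hx := congrArg M hsym
    rw [M.apply_symm_apply] at hx
    rw [hx] at h
    exact lt_irrefl _ h
end SMInst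
end Aux2
section Aux3
namespace SMInst

variable {n : ℕ} {I : SMInst n} {A N M M' : Fin n ≃ Fin n} {K L : List (Fin n × Fin n)}

/-- successor index in a cyclic list -/
def nx (L : List (Fin n × Fin n)) (i : Fin L.length) : Fin L.length :=
  ⟨(i.1 + 1) % L.length, Nat.mod_lt _ i.pos⟩

lemma exposed_pair (hE : I.ExposedIn A K) (i : Fin K.length) :
    A (K.get i).1 = (K.get i).2 :=
  hE.2.2.1 _ (List.get_mem K i)

lemma exposed_lt (hE : I.ExposedIn A K) (i : Fin K.length) :
    I.mrank (K.get i).1 (K.get i).2 < I.mrank (K.get i).1 (K.get (nx K i)).2 :=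
  (hE.2.2.2 i).1

lemma exposed_w (hE : I.ExposedIn A K) (i : Fin K.length) :
    I.wrank (K.get (nx K i)).2 (K.get i).1 < I.wrank (K.get (nx K i)).2 (K.get (nx K i)).1 :=
  (hE.2.2.2 i).2.1

lemma exposed_min (hE : I.ExposedIn A K) (i : Fin K.length) {w : Fin n}
    (h1 : I.mrank (K.get i).1 (K.get i).2 < I.mrank (K.get i).1 w)
    (h2 : I.mrank (K.get i).1 w < I.mrank (K.get i).1 (K.get (nx K i)).2) :
    ¬ I.wrank w (K.get i).1 < I.wrank w (A.symm w) :=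
  (hE.2.2.2 i).2.2 w h1 h2

lemma mem_fst_iff {m : Fin n} : m ∈ K.map Prod.fst ↔ ∃ s : Fin K.length, (K.get s).1 = m := by
  rw [List.mem_map]
  constructor
  · rintro ⟨p, hp, hp1⟩
    obtain ⟨s, hs⟩ := List.mem_iff_get.mp hp
    exact ⟨s, by rw [hs, hp1]⟩
  · rintro ⟨s, hs⟩
    exact ⟨K.get s, List.get_mem K s, hs⟩

lemma elim_apply (hEl : I.Elim M M' K) (s : Fin K.length) :
    M' (K.get s).1 = (K.get (nx K s)).2 :=
  hEl.2.1 s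

lemma elim_apply_of_not_mem (hEl : I.Elim M M' K) {m : Fin n} (h : m ∉ K.map Prod.fst) :
    M' m = M m :=
  hEl.2.2 m h

lemma elim_dominates (hEl : I.Elim M M' K) (x : Fin n) :
    I.mrank x (M x) ≤ I.mrank x (M' x) := by
  by_cases hx : x ∈ K.map Prod.fst
  · obtain ⟨s, hs⟩ := mem_fst_iff.mp hx
    have h1 : M x = (K.get s).2 := by rw [← hs]; exact exposed_pair hEl.1 s
    have h2 : M' x = (K.get (nx K s)).2 := by rw [← hs]; exact elim_apply hEl s
    rw [h1, h2, ← hs]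
    exact le_of_lt (exposed_lt hEl.1 s)
  · rw [elim_apply_of_not_mem hEl hx]

lemma elim_symm_women (hEl : I.Elim M M' K) (y : Fin n) :
    I.wrank y (M'.symm y) ≤ I.wrank y (M.symm y) := by
  set z := M'.symm y with hzdef
  have hz : M' z = y := M'.apply_symm_apply y
  by_cases hx : z ∈ K.map Prod.fst
  · obtain ⟨s, hs⟩ := mem_fst_iff.mp hx
    have hy : y = (K.get (nx K s)).2 := by rw [← hz, ← hs]; exact elim_apply hEl s
    have hMy : M.symm y = (K.get (nx K s)).1 := by
      rw [M.symm_apply_eq, hy]; exact (exposed_pair hEl.1 (nx K s)).symm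
    have := exposed_w hEl.1 s
    rw [← hy, hs] at this
    rw [hMy]
    exact le_of_lt this
  · have : M z = y := by rw [← elim_apply_of_not_mem hEl hx]; exact hz
    rw [M.symm_apply_eq.mpr this.symm]

lemma elim_stable (hM : I.IsStable M) (hEl : I.Elim M M' K) : I.IsStable M' := by
  intro x y hb
  obtain ⟨h1, h2⟩ := hb
  have h2' : I.wrank y x < I.wrank y (M.symm y) := lt_of_lt_of_le h2 (elim_symm_women hEl y)
  have hman : I.mrank x (M x) ≤ I.mrank x y := stable_mle hM h2'
  by_cases hx : x ∈ K.map Prod.fst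
  · obtain ⟨s, hs⟩ := mem_fst_iff.mp hx
    have hu : M x = (K.get s).2 := by rw [← hs]; exact exposed_pair hEl.1 s
    have hux : M' x = (K.get (nx K s)).2 := by rw [← hs]; exact elim_apply hEl s
    by_cases huy : (K.get s).2 = y
    · have : M.symm y = x := by rw [M.symm_apply_eq, ← huy, hu]
      rw [this] at h2'
      exact lt_irrefl _ h2'
    · have hlt : I.mrank x (K.get s).2 < I.mrank x y := by
        refine mrank_lt_of_ne huy ?_
        rw [← hu]; exact hman
      have := exposed_min hEl.1 s (w := y) (by rw [hs]; exact hlt)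
        (by rw [hs]; rw [hux] at h1; exact h1)
      rw [hs] at this
      exact this h2'
  · rw [elim_apply_of_not_mem hEl hx] at h1
    exact absurd h1 (not_lt_of_ge hman)

lemma exposed_snd_map (hE : I.ExposedIn A K) : K.map Prod.snd = (K.map Prod.fst).map A := by
  rw [List.map_map]
  exact List.map_congr_left fun p hp => ((hE.2.2.1 p hp).symm : p.2 = (A ∘ Prod.fst) p)

lemma exposed_snd_nodup (hE : I.ExposedIn A K) : (K.map Prod.snd).Nodup := by
  rw [exposed_snd_map hE]
  exact hE.2.1.map A.injective

lemma exists_elim (hE : I.ExposedIn A K) : ∃ M', I.Elim A M' K := by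
  classical
  set ws := K.map Prod.snd with hws
  have hnd : ws.Nodup := exposed_snd_nodup hE
  refine ⟨A.trans ws.formPerm, hE, ?_, ?_⟩
  · intro s
    have hlen : ws.length = K.length := K.length_map Prod.snd
    have hget : (K.get s).2 = ws[(s : ℕ)]'(by rw [hlen]; exact s.isLt) := by
      simp [hws, List.get_eq_getElem]
    have := List.formPerm_apply_getElem ws hnd s (by rw [hlen]; exact s.isLt)
    simp only [Equiv.trans_apply]
    rw [exposed_pair hE s, hget, this]
    simp only [nx, hws]
    simp [List.get_eq_getElem, hlen]
  · intro m hm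
    have hA : A m ∉ ws := by
      intro hmem
      rw [hws, List.mem_map] at hmem
      obtain ⟨p, hp, hp2⟩ := hmem
      have : p.2 = A p.1 := (hE.2.2.1 p hp).symm
      rw [this] at hp2
      have : p.1 = m := A.injective hp2
      exact hm (List.mem_map.mpr ⟨p, hp, this⟩)
    simp only [Equiv.trans_apply]
    exact List.formPerm_apply_of_notMem hA

end SMInst
end Aux3
section Aux4
namespace SMInst

variable {n : ℕ} {I : SMInst n} {A N : Fin n ≃ Fin n} {K L : List (Fin n × Fin n)}

lemma onestep (hA : I.IsStable A) (hN : I.IsStable N)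
    (hKA : I.ExposedIn A K) (hLN : I.ExposedIn N L) {i : Fin K.length} {j : Fin L.length}
    (hij : K.get i = L.get j) : K.get (nx K i) = L.get (nx L j) := by
  set m := (K.get i).1 with hm
  set w := (K.get i).2 with hw
  have hLj1 : (L.get j).1 = m := by rw [← hij]
  have hLj2 : (L.get j).2 = w := by rw [← hij]
  have hAm : A m = w := exposed_pair hKA i
  have hNm : N m = w := by
    have := exposed_pair hLN j
    rwa [hLj1, hLj2] at this
  set v := (K.get (nx K i)).2 with hv0
  set v₂ := (L.get (nx L j)).2 with hv20
  obtain ⟨A', hElA⟩ := exists_elim hKA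
  obtain ⟨N', hElN⟩ := exists_elim hLN
  have hA' : I.IsStable A' := elim_stable hA hElA
  have hN' : I.IsStable N' := elim_stable hN hElN
  have hA'm : A' m = v := elim_apply hElA i
  have hN'm : N' m = v₂ := by
    have := elim_apply hElN j
    rwa [hLj1] at this
  have h1 : I.mrank m w < I.mrank m v := exposed_lt hKA i
  have h1' : I.mrank m w < I.mrank m v₂ := by
    have := exposed_lt hLN j
    rwa [hLj1, hLj2] at this
  -- step 1: v = v₂
  have hs1 : ¬ I.mrank m v < I.mrank m v₂ := by
    intro hlt
    have hmin := exposed_min hLN j (w := v) (by rw [hLj1, hLj2]; exact h1)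
      (by rw [hLj1]; exact hlt)
    rw [hLj1] at hmin
    exact hmin ((trich hA' hN hA'm).mpr (by rw [hNm]; exact h1))
  have hs2 : ¬ I.mrank m v₂ < I.mrank m v := by
    intro hlt
    have hmin := exposed_min hKA i (w := v₂) h1' hlt
    exact hmin ((trich hN' hA hN'm).mpr (by rw [hAm]; exact h1'))
  have hv : v = v₂ := I.mrank_inj m (le_antisymm (le_of_not_gt hs2) (le_of_not_gt hs1))
  -- step 2: first components agree
  set a := (K.get (nx K i)).1 with ha0
  set b := (L.get (nx L j)).1 with hb0
  have hAa : A a = v := exposed_pair hKA (nx K i)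
  have hNb : N b = v := by
    rw [hv]; exact exposed_pair hLN (nx L j)
  have hvm_a : I.wrank v m < I.wrank v a := exposed_w hKA i
  have hvm_b : I.wrank v m < I.wrank v b := by
    rw [hv]
    have := exposed_w hLN j
    rwa [hLj1] at this
  have hwv : w ≠ v := fun h => by rw [h] at h1; exact lt_irrefl _ h1
  have ham : a ≠ m := fun h => hwv (by rw [← hAm, ← h, hAa])
  have hbm : b ≠ m := fun h => hwv (by rw [← hNm, ← h, hNb])
  have hNs : N.symm v = b := N.symm_apply_eq.mpr hNb.symm
  have hAs : A.symm v = a := A.symm_apply_eq.mpr hAa.symm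
  have hab : a = b := by
    rcases lt_trichotomy (I.wrank v a) (I.wrank v b) with hlt | heq | hgt
    · exfalso
      have h2 : I.mrank a (N a) < I.mrank a v := (trich hA hN hAa).mp (by rw [hNs]; exact hlt)
      have hN'mv : N' m = v := by rw [hv]; exact hN'm
      have hN'vm : N'.symm v = m := N'.symm_apply_eq.mpr hN'mv.symm
      have hN'a_ne : N' a ≠ v := fun h => ham (N'.injective (h.trans hN'mv.symm))
      have h4 : I.mrank a v ≤ I.mrank a (N' a) := by
        by_contra hc
        push_neg at hc
        have := (trich hA hN' hAa).mpr hc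
        rw [hN'vm] at this
        exact lt_asymm hvm_a this
      have h4' : I.mrank a v < I.mrank a (N' a) :=
        mrank_lt_of_ne (fun he => hN'a_ne he.symm) h4
      have hchange : N' a ≠ N a := fun h => by
        rw [h] at h4'
        exact lt_irrefl _ (h2.trans h4')
      have hmem : a ∈ L.map Prod.fst := by
        by_contra hmem
        exact hchange (elim_apply_of_not_mem hElN hmem)
      obtain ⟨s, hs⟩ := mem_fst_iff.mp hmem
      have hsa2 : (L.get s).2 = N a := by rw [← hs]; exact (exposed_pair hLN s).symm
      have hsnx : (L.get (nx L s)).2 = N' a := by rw [← hs]; exact (elim_apply hElN s).symm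
      have hmin := exposed_min hLN s (w := v) (by rw [hs, hsa2]; exact h2)
        (by rw [hs, hsnx]; exact h4')
      rw [hs, hNs] at hmin
      exact hmin hlt
    · exact I.wrank_inj v heq
    · exfalso
      have h2 : I.mrank b (A b) < I.mrank b v := (trich hN hA hNb).mp (by rw [hAs]; exact hgt)
      have hA'vm : A'.symm v = m := A'.symm_apply_eq.mpr hA'm.symm
      have hA'b_ne : A' b ≠ v := fun h => hbm (A'.injective (h.trans hA'm.symm))
      have h4 : I.mrank b v ≤ I.mrank b (A' b) := by
        by_contra hc
        push_neg at hc
        have := (trich hN hA' hNb).mpr hc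
        rw [hA'vm] at this
        exact lt_asymm hvm_b this
      have h4' : I.mrank b v < I.mrank b (A' b) :=
        mrank_lt_of_ne (fun he => hA'b_ne he.symm) h4
      have hchange : A' b ≠ A b := fun h => by
        rw [h] at h4'
        exact lt_irrefl _ (h2.trans h4')
      have hmem : b ∈ K.map Prod.fst := by
        by_contra hmem
        exact hchange (elim_apply_of_not_mem hElA hmem)
      obtain ⟨s, hs⟩ := mem_fst_iff.mp hmem
      have hsa2 : (K.get s).2 = A b := by rw [← hs]; exact (exposed_pair hKA s).symm
      have hsnx : (K.get (nx K s)).2 = A' b := by rw [← hs]; exact (elim_apply hElA s).symm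
      have hmin := exposed_min hKA s (w := v) (by rw [hs, hsa2]; exact h2)
        (by rw [hs, hsnx]; exact h4')
      rw [hs, hAs] at hmin
      exact hmin hgt
  exact Prod.ext hab hv

end SMInst
end Aux4
section Aux5
namespace SMInst

variable {n : ℕ} {I : SMInst n} {A N : Fin n ≃ Fin n} {K L : List (Fin n × Fin n)}

/-- index shifted by t, cyclically -/
def adx (L : List (Fin n × Fin n)) (i : Fin L.length) (t : ℕ) : Fin L.length :=
  ⟨(i.1 + t) % L.length, Nat.mod_lt _ i.pos⟩

lemma adx_zero (i : Fin L.length) : adx L i 0 = i := by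
  simp [adx, Nat.mod_eq_of_lt i.isLt]

lemma adx_succ (i : Fin L.length) (t : ℕ) : adx L i (t + 1) = nx L (adx L i t) := by
  simp only [adx, nx]
  congr 1
  rw [Nat.mod_add_mod, Nat.add_assoc]

lemma iterate_eq (hA : I.IsStable A) (hN : I.IsStable N)
    (hKA : I.ExposedIn A K) (hLN : I.ExposedIn N L) {i : Fin K.length} {j : Fin L.length}
    (hij : K.get i = L.get j) (t : ℕ) : K.get (adx K i t) = L.get (adx L j t) := by
  induction t with
  | zero => rw [adx_zero, adx_zero]; exact hij
  | succ t ih => rw [adx_succ, adx_succ]; exact onestep hA hN hKA hLN ih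

lemma uniq_subset (hA : I.IsStable A) (hN : I.IsStable N)
    (hKA : I.ExposedIn A K) (hLN : I.ExposedIn N L) {i : Fin K.length} {j : Fin L.length}
    (hij : K.get i = L.get j) : ∀ p ∈ K, p ∈ L := by
  intro p hp
  obtain ⟨s, hs⟩ := List.mem_iff_get.mp hp
  have hik : (i : ℕ) ≤ K.length + (s : ℕ) := le_trans (le_of_lt i.isLt) (Nat.le_add_right _ _)
  have hadx : adx K i (K.length + (s : ℕ) - (i : ℕ)) = s := by
    apply Fin.ext
    simp only [adx]
    rw [Nat.add_sub_cancel' hik, Nat.add_mod_left, Nat.mod_eq_of_lt s.isLt]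
  have := iterate_eq hA hN hKA hLN hij (K.length + (s : ℕ) - (i : ℕ))
  rw [hadx, hs] at this
  rw [this]
  exact List.get_mem L _
end SMInst
end Aux5
section Aux6
namespace SMInst

variable {n : ℕ} {I : SMInst n} {A N M P M₀ : Fin n ≃ Fin n} {K L : List (Fin n × Fin n)}

lemma uniq (hA : I.IsStable A) (hN : I.IsStable N)
    (hKA : I.ExposedIn A K) (hLN : I.ExposedIn N L) {i : Fin K.length} {j : Fin L.length}
    (hij : K.get i = L.get j) : K.toFinset = L.toFinset := by
  ext p
  simp only [List.mem_toFinset]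
  exact ⟨fun hp => uniq_subset hA hN hKA hLN hij p hp,
    fun hp => uniq_subset hN hA hLN hKA hij.symm p hp⟩

lemma elimSeq_stable {Ls : List (List (Fin n × Fin n))} (h : I.ElimSeq M Ls P)
    (hM : I.IsStable M) : I.IsStable P := by
  induction Ls generalizing M with
  | nil => rw [show P = M from h]; exact hM
  | cons K Ls ih =>
    obtain ⟨Mmid, hEl, hseq⟩ := h
    exact ih hseq (elim_stable hM hEl)

lemma cross (hN : I.IsStable N) (hLN : I.ExposedIn N L) {i0 : Fin L.length} {m w : Fin n}
    (h0 : L.get i0 = (m, w)) :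
    ∀ (Ls : List (List (Fin n × Fin n))) (A P : Fin n ≃ Fin n), I.ElimSeq A Ls P →
      I.IsStable A → I.mrank m (A m) ≤ I.mrank m w → I.mrank m w < I.mrank m (P m) →
      ∃ Kk ∈ Ls, Kk.toFinset = L.toFinset := by
  have hNm : N m = w := by have := exposed_pair hLN i0; rwa [h0] at this
  intro Ls
  induction Ls with
  | nil =>
    intro A P hseq hA hle hlt
    rw [show P = A from hseq] at hlt
    omega
  | cons K Ls ih =>
    intro A P hseq hA hle hlt
    obtain ⟨Amid, hEl, hseq'⟩ := hseq
    have hAmid : I.IsStable Amid := elim_stable hA hEl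
    by_cases hc : I.mrank m w < I.mrank m (Amid m)
    · -- the crossing happens at K
      have hchange : Amid m ≠ A m := fun h => by rw [h] at hc; omega
      have hmem : m ∈ K.map Prod.fst := by
        by_contra hmem
        exact hchange (elim_apply_of_not_mem hEl hmem)
      obtain ⟨s, hs⟩ := mem_fst_iff.mp hmem
      have hu : (K.get s).2 = A m := by rw [← hs]; exact (exposed_pair hEl.1 s).symm
      have hnx : (K.get (nx K s)).2 = Amid m := by rw [← hs]; exact (elim_apply hEl s).symm
      have huw : A m = w := by
        by_contra hne2
        have hlt2 : I.mrank m (A m) < I.mrank m w :=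
          mrank_lt_of_ne hne2 hle
        have hmin := exposed_min hEl.1 s (w := w) (by rw [hs, hu]; exact hlt2)
          (by rw [hs, hnx]; exact hc)
        rw [hs] at hmin
        exact hmin ((trich hN hA hNm).mpr hlt2)
      have hKs : K.get s = (m, w) := by
        have : (K.get s).2 = w := by rw [hu, huw]
        rw [← hs] at *
        exact Prod.ext rfl this
      refine ⟨K, List.mem_cons_self, ?_⟩
      exact uniq hA hN hEl.1 hLN (i := s) (j := i0) (by rw [hKs, h0])
    · push_neg at hc
      obtain ⟨Kk, hKk, heq⟩ := ih Amid P hseq' hAmid hc hlt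
      exact ⟨Kk, List.mem_cons_of_mem _ hKk, heq⟩

end SMInst
end Aux6
/-- two (distinct) incomparable rotations involve disjoint sets of men. -/
theorem incomparable_rotations_disjoint_men {n : ℕ} (I : SMInst n)
    (L L' : List (Fin n × Fin n)) (hL : I.IsRotation L) (hL' : I.IsRotation L')
    (hne : L.toFinset ≠ L'.toFinset)
    (h₁ : ¬ I.Precedes L L') (h₂ : ¬ I.Precedes L' L) :
    Disjoint (L.map Prod.fst).toFinset (L'.map Prod.fst).toFinset := by
  classical
  by_contra hnd
  obtain ⟨m, hm1, hm2⟩ := Finset.not_disjoint_iff.mp hnd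
  rw [List.mem_toFinset] at hm1 hm2
  obtain ⟨iL, hiL⟩ := SMInst.mem_fst_iff.mp hm1
  obtain ⟨iL', hiL'⟩ := SMInst.mem_fst_iff.mp hm2
  set w := (L.get iL).2 with hwdef
  set w' := (L'.get iL').2 with hw'def
  have h0 : L.get iL = (m, w) := Prod.ext hiL rfl
  have h0' : L'.get iL' = (m, w') := Prod.ext hiL' rfl
  obtain ⟨N, hNst, hNL⟩ := hL
  unfold SMInst.Precedes at h₁ h₂
  push_neg at h₁ h₂
  obtain ⟨M₀, Js, P, hM₀, hJs, hPst, hPL', havoid⟩ := h₁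
  obtain ⟨M₀', Ks, N₂, hM₀', hKs, hN₂st, hN₂L, havoid'⟩ := h₂
  have hNm : N m = w := by have := SMInst.exposed_pair hNL iL; rwa [hiL] at this
  have hN₂m : N₂ m = w := by have := SMInst.exposed_pair hN₂L iL; rwa [hiL] at this
  have hPm : P m = w' := by have := SMInst.exposed_pair hPL' iL'; rwa [hiL'] at this
  rcases lt_trichotomy (I.mrank m w) (I.mrank m w') with hlt | heq | hgt
  · obtain ⟨Kk, hKk, heqf⟩ := SMInst.cross hNst hNL h0 Js M₀ P hJs hM₀.1
      (le_trans (hM₀.2 N hNst m) (le_of_eq (by rw [hNm]))) (by rw [hPm]; exact hlt)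
    exact havoid Kk hKk heqf
  · have hww : w = w' := I.mrank_inj m heq
    exact hne (SMInst.uniq hNst hPst hNL hPL' (i := iL) (j := iL')
      (by rw [h0, h0', hww]))
  · obtain ⟨Kk, hKk, heqf⟩ := SMInst.cross hPst hPL' h0' Ks M₀' N₂ hKs hM₀'.1
      (le_trans (hM₀'.2 P hPst m) (le_of_eq (by rw [hPm]))) (by rw [hN₂m]; exact hgt)
    exact havoid' Kk hKk heqf
end

section
/- Every man–woman pair (m, w) appears in at most one rotation of a stable marriage instance; consequently an instance of size n has at most n(n−1)/2 rotations. -/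
namespace SMInst

variable {n : ℕ} (I : SMInst n)

/-- Key lemma: impossible that `m` strictly prefers his `M`-partner to his `M''`-partner
`v`, while `v` strictly prefers her `M`-partner to `m`. -/
lemma keyK {M M'' : Fin n ≃ Fin n} (hM : I.IsStable M) (hM'' : I.IsStable M'')
    {m : Fin n} (hp : I.mrank m (M m) < I.mrank m (M'' m))
    (hv : I.wrank (M'' m) (M.symm (M'' m)) < I.wrank (M'' m) m) : False := by
  classical
  set S : Finset (Fin n) := Finset.univ.filter (fun a => I.mrank a (M a) < I.mrank a (M'' a))
    with hS
  have hmS : m ∈ S := by simp [hS, hp]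
  have hmaps : ∀ a ∈ S, M''.symm (M a) ∈ S := by
    intro a ha
    rw [hS, Finset.mem_filter] at ha ⊢
    refine ⟨Finset.mem_univ _, ?_⟩
    set x := M a with hx
    set b := M''.symm x with hb
    have hxa : I.mrank a x < I.mrank a (M'' a) := ha.2
    have hxne : M'' a ≠ x := fun h => by rw [h] at hxa; exact lt_irrefl _ hxa
    have hba : b ≠ a := by
      intro h
      apply hxne
      rw [← h, hb]; simp
    have h1 : ¬ I.Blocks M'' a x := hM'' a x
    have h2 : ¬ (I.wrank x a < I.wrank x (M''.symm x)) := by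
      intro hc; exact h1 ⟨hxa, hc⟩
    have hxba : I.wrank x b < I.wrank x a := by
      rcases lt_or_eq_of_le (not_lt.mp h2) with h | h
      · exact h
      · exact absurd (I.wrank_inj x h) hba
    have hMsx : M.symm x = a := by rw [hx]; simp
    have h3 : ¬ I.Blocks M b x := hM b x
    have h4 : ¬ (I.mrank b x < I.mrank b (M b)) := by
      intro hc; exact h3 ⟨hc, by rw [hMsx]; exact hxba⟩
    have hMbx : M b ≠ x := by
      intro h
      apply hba
      rw [← hMsx, ← h]; simp
    have : I.mrank b (M b) < I.mrank b x := by
      rcases lt_or_eq_of_le (not_lt.mp h4) with h | h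
      · exact h
      · exact absurd (I.mrank_inj b h) hMbx
    have hMb : M'' b = x := by rw [hb]; simp
    rw [hMb]
    exact this
  have hinj : ∀ (a₁ a₂ : Fin n), a₁ ∈ S → a₂ ∈ S →
      M''.symm (M a₁) = M''.symm (M a₂) → a₁ = a₂ := by
    intro a₁ a₂ _ _ h
    exact M.injective (M''.symm.injective h)
  obtain ⟨a, haS, ha⟩ := Finset.surj_on_of_inj_on_of_card_le
    (s := S) (t := S) (fun a _ => M''.symm (M a)) hmaps hinj le_rfl m hmS
  have hMa : M a = M'' m := by
    have := congrArg M'' ha.symm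
    simpa using this
  have haS' : I.mrank a (M'' m) < I.mrank a (M'' a) := by
    have := (Finset.mem_filter.mp haS).2
    rwa [hMa] at this
  have h6 : ¬ (I.wrank (M'' m) a < I.wrank (M'' m) m) := by
    intro hc
    refine hM'' a (M'' m) ⟨haS', ?_⟩
    simpa using hc
  have hMsv : M.symm (M'' m) = a := by rw [← hMa]; simp
  rw [hMsv] at hv
  exact h6 hv

/-- The successor index in a cyclic list. -/
def succIdx (L : List (Fin n × Fin n)) (i : Fin L.length) : Fin L.length :=
  ⟨(i.1 + 1) % L.length, Nat.mod_lt _ i.pos⟩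

variable {I}

lemma exposed_pair_s6 {M : Fin n ≃ Fin n} {L : List (Fin n × Fin n)}
    (hexp : I.ExposedIn M L) (i : Fin L.length) : M (L.get i).1 = (L.get i).2 :=
  hexp.2.2.1 _ (L.get_mem i)

/-- C1 : if a rotation through `(m,w)` with successor woman `w₁` is exposed in a stable
matching, then no stable matching matches `m` strictly between `w` and `w₁`. -/
lemma no_between {M : Fin n ≃ Fin n} {L : List (Fin n × Fin n)}
    (hM : I.IsStable M) (hexp : I.ExposedIn M L) (i : Fin L.length)
    {M'' : Fin n ≃ Fin n} (hM'' : I.IsStable M'')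
    (h1 : I.mrank (L.get i).1 (L.get i).2 < I.mrank (L.get i).1 (M'' (L.get i).1))
    (h2 : I.mrank (L.get i).1 (M'' (L.get i).1) <
      I.mrank (L.get i).1 (L.get (succIdx L i)).2) : False := by
  set m := (L.get i).1 with hm
  set v := M'' m with hvdef
  have hMm : M m = (L.get i).2 := exposed_pair_s6 hexp i
  have h3 := (hexp.2.2.2 i).2.2 v h1 h2
  have hvne : v ≠ (L.get i).2 := by
    intro h; rw [h] at h1; exact lt_irrefl _ h1
  have hMsv : M.symm v ≠ m := by
    intro h
    apply hvne
    rw [← hMm, ← h]; simp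
  have : I.wrank v (M.symm v) < I.wrank v m := by
    rcases lt_or_eq_of_le (not_lt.mp h3) with h | h
    · exact h
    · exact absurd (I.wrank_inj v h) hMsv
  exact keyK I hM hM'' (by rw [hMm]; exact h1) this

/-- The matching obtained by eliminating the rotation `L` from `M`. -/
def elimMatch (M : Fin n ≃ Fin n) (L : List (Fin n × Fin n)) : Fin n ≃ Fin n :=
  M.trans (L.map Prod.snd).formPerm

lemma women_eq {M : Fin n ≃ Fin n} {L : List (Fin n × Fin n)}
    (hexp : I.ExposedIn M L) : L.map Prod.snd = L.map (fun p => M p.1) :=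
  List.map_congr_left fun p hp => (hexp.2.2.1 p hp).symm

lemma women_nodup {M : Fin n ≃ Fin n} {L : List (Fin n × Fin n)}
    (hexp : I.ExposedIn M L) : (L.map Prod.snd).Nodup := by
  rw [women_eq hexp]
  have : (fun p : Fin n × Fin n => M p.1) = M ∘ Prod.fst := rfl
  rw [this, ← List.map_map]
  exact hexp.2.1.map M.injective

lemma elim_get {M : Fin n ≃ Fin n} {L : List (Fin n × Fin n)}
    (hexp : I.ExposedIn M L) (i : Fin L.length) :
    elimMatch M L (L.get i).1 = (L.get (succIdx L i)).2 := by
  have hnd := women_nodup hexp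
  have hlen : (L.map Prod.snd).length = L.length := List.length_map _
  have hi : i.1 < (L.map Prod.snd).length := by rw [hlen]; exact i.2
  have hget : (L.map Prod.snd)[i.1] = (L.get i).2 := by
    simp [List.getElem_map]
  have := List.formPerm_apply_getElem _ hnd i.1 hi
  show (L.map Prod.snd).formPerm (M (L.get i).1) = _
  rw [exposed_pair_s6 hexp i, ← hget, this]
  simp [List.getElem_map, succIdx, hlen]

lemma elim_not_mem {M : Fin n ≃ Fin n} {L : List (Fin n × Fin n)}
    (hexp : I.ExposedIn M L) {m : Fin n} (hm : m ∉ L.map Prod.fst) :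
    elimMatch M L m = M m := by
  have : M m ∉ L.map Prod.snd := by
    intro hmem
    rw [women_eq hexp] at hmem
    obtain ⟨p, hp, hpe⟩ := List.mem_map.mp hmem
    exact hm (List.mem_map.mpr ⟨p, hp, M.injective hpe⟩)
  show (L.map Prod.snd).formPerm (M m) = M m
  exact List.formPerm_apply_of_notMem this

lemma elim_symm_get {M : Fin n ≃ Fin n} {L : List (Fin n × Fin n)}
    (hexp : I.ExposedIn M L) (i : Fin L.length) :
    (elimMatch M L).symm (L.get (succIdx L i)).2 = (L.get i).1 :=
  (Equiv.symm_apply_eq _).mpr (elim_get hexp i).symm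

lemma elim_symm_not_mem {M : Fin n ≃ Fin n} {L : List (Fin n × Fin n)}
    (hexp : I.ExposedIn M L) {w : Fin n} (hw : w ∉ L.map Prod.snd) :
    (elimMatch M L).symm w = M.symm w := by
  have h1 : elimMatch M L (M.symm w) = w := by
    show (L.map Prod.snd).formPerm (M (M.symm w)) = w
    rw [Equiv.apply_symm_apply]
    exact List.formPerm_apply_of_notMem hw
  exact (Equiv.symm_apply_eq _).mpr h1.symm

/-- every index is the successor of a (unique) index -/
lemma pred_exists {L : List (Fin n × Fin n)} (t : Fin L.length) :
    ∃ j : Fin L.length, succIdx L j = t := by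
  refine ⟨⟨(t.1 + L.length - 1) % L.length, Nat.mod_lt _ t.pos⟩, ?_⟩
  have hpos := t.pos
  have h1 : (t.1 + L.length - 1) + 1 = t.1 + L.length := by omega
  apply Fin.ext
  show ((t.1 + L.length - 1) % L.length + 1) % L.length = t.1
  rw [Nat.mod_add_mod, h1, Nat.add_mod_right, Nat.mod_eq_of_lt t.2]

/-- women of the rotation prefer their new partner to the old one (transitively below):
if `b` is a rotation woman then her elim-partner is strictly better than her `M`-partner. -/
lemma elim_women_better {M : Fin n ≃ Fin n} {L : List (Fin n × Fin n)}
    (hexp : I.ExposedIn M L) {b a : Fin n}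
    (h2 : I.wrank b a < I.wrank b ((elimMatch M L).symm b)) :
    I.wrank b a < I.wrank b (M.symm b) := by
  classical
  by_cases hb : b ∈ L.map Prod.snd
  · obtain ⟨p, hp, hpe⟩ := List.mem_map.mp hb
    obtain ⟨t, ht⟩ := List.mem_iff_get.mp hp
    obtain ⟨j, hj⟩ := pred_exists t
    have hbt : (L.get t).2 = b := by rw [ht]; exact hpe
    have hsymm : (elimMatch M L).symm b = (L.get j).1 := by
      rw [← hbt, ← hj]
      exact elim_symm_get hexp j
    have hMsb : M.symm b = (L.get t).1 := by
      rw [← hbt, ← exposed_pair_s6 hexp t, Equiv.symm_apply_apply]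
    have hcl2 := (hexp.2.2.2 j).2.1
    have hjt : (⟨(j.1 + 1) % L.length, Nat.mod_lt _ j.pos⟩ : Fin L.length) = t := hj
    rw [hjt, hbt] at hcl2
    rw [hsymm] at h2
    rw [hMsb]
    exact lt_trans h2 hcl2
  · rwa [elim_symm_not_mem hexp hb] at h2

/-- Lemma E : eliminating an exposed rotation from a stable matching is stable. -/
lemma elim_stable_s6 {M : Fin n ≃ Fin n} {L : List (Fin n × Fin n)}
    (hM : I.IsStable M) (hexp : I.ExposedIn M L) : I.IsStable (elimMatch M L) := by
  classical
  rintro a b ⟨h1, h2⟩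
  have h2' : I.wrank b a < I.wrank b (M.symm b) := elim_women_better hexp h2
  by_cases ha : a ∈ L.map Prod.fst
  · obtain ⟨p, hp, hpe⟩ := List.mem_map.mp ha
    obtain ⟨i, hi⟩ := List.mem_iff_get.mp hp
    have hai : (L.get i).1 = a := by rw [hi]; exact hpe
    have hNa : elimMatch M L a = (L.get (succIdx L i)).2 := by
      rw [← hai]; exact elim_get hexp i
    rw [hNa] at h1
    have hMa : M a = (L.get i).2 := by rw [← hai]; exact exposed_pair_s6 hexp i
    rcases lt_trichotomy (I.mrank a b) (I.mrank a (L.get i).2) with hlt | heq | hgt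
    · exact hM a b ⟨by rwa [hMa], h2'⟩
    · have hbw : b = (L.get i).2 := I.mrank_inj a heq
      have : M.symm b = a := by rw [hbw, ← hMa, Equiv.symm_apply_apply]
      rw [this] at h2'
      exact lt_irrefl _ h2'
    · have h3 := (hexp.2.2.2 i).2.2 b
      rw [hai] at h3
      exact h3 hgt h1 h2'
  · rw [elim_not_mem hexp ha] at h1
    exact hM a b ⟨h1, h2'⟩

end SMInst

namespace SMInst

variable {n : ℕ} {I : SMInst n}

/-- The transposed instance (women propose). -/
def transp (I : SMInst n) : SMInst n := ⟨I.wrank, I.mrank, I.wrank_inj, I.mrank_inj⟩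

lemma transp_stable {M : Fin n ≃ Fin n} (hM : I.IsStable M) :
    I.transp.IsStable M.symm := by
  rintro w m ⟨h1, h2⟩
  refine hM m w ⟨?_, h1⟩
  simpa [transp] using h2

/-- The dual rotation: the same cycle read on the women's side. -/
def dualList (L : List (Fin n × Fin n)) : List (Fin n × Fin n) :=
  List.ofFn (fun i : Fin L.length => ((L.get (succIdx L i)).2, (L.get i).1))

lemma dualList_length (L : List (Fin n × Fin n)) : (dualList L).length = L.length :=
  List.length_ofFn

lemma dualList_get {L : List (Fin n × Fin n)} (j : Fin (dualList L).length) :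
    (dualList L).get j
      = ((L.get (succIdx L (Fin.cast (dualList_length L) j))).2,
         (L.get (Fin.cast (dualList_length L) j)).1) :=
  List.get_ofFn _ _

lemma succIdx_cast {L : List (Fin n × Fin n)} (j : Fin (dualList L).length) :
    Fin.cast (dualList_length L) (succIdx (dualList L) j)
      = succIdx L (Fin.cast (dualList_length L) j) := by
  apply Fin.ext
  exact congrArg (fun k => (j.1 + 1) % k) (dualList_length L)

lemma succIdx_inj {L : List (Fin n × Fin n)} :
    Function.Injective (succIdx (n := n) L) :=
  Finite.injective_iff_surjective.mpr (fun t => pred_exists t)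

/-- women of the rotation, as a function of the index, are injective -/
lemma snd_inj {M : Fin n ≃ Fin n} {L : List (Fin n × Fin n)}
    (hexp : I.ExposedIn M L) {t t' : Fin L.length}
    (h : (L.get t).2 = (L.get t').2) : t = t' := by
  have hnd := women_nodup hexp
  have hlt : t.1 < (L.map Prod.snd).length := by simp [t.2]
  have hlt' : t'.1 < (L.map Prod.snd).length := by simp [t'.2]
  have hh : (L.map Prod.snd)[t.1]'hlt = (L.map Prod.snd)[t'.1]'hlt' := by
    rw [List.getElem_map, List.getElem_map]
    simpa [List.get_eq_getElem] using h
  exact Fin.ext ((hnd.getElem_inj_iff).mp hh)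

lemma fst_inj {M : Fin n ≃ Fin n} {L : List (Fin n × Fin n)}
    (hexp : I.ExposedIn M L) {t t' : Fin L.length}
    (h : (L.get t).1 = (L.get t').1) : t = t' := by
  apply snd_inj hexp
  rw [← exposed_pair_s6 hexp t, ← exposed_pair_s6 hexp t', h]

/-- Duality: the dual rotation is exposed (in the transposed instance) in the
eliminated matching. -/
lemma dual_exposed {M : Fin n ≃ Fin n} {L : List (Fin n × Fin n)}
    (hM : I.IsStable M) (hexp : I.ExposedIn M L) :
    I.transp.ExposedIn (elimMatch M L).symm (dualList L) := by
  classical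
  refine ⟨?_, ?_, ?_, ?_⟩
  · rw [dualList_length]; exact hexp.1
  · rw [List.nodup_iff_injective_get]
    intro a b hab
    have hla : a.1 < (dualList L).length := by
      have := a.2; simpa using this
    have hlb : b.1 < (dualList L).length := by
      have := b.2; simpa using this
    have h1 : ((dualList L).map Prod.fst).get a = ((dualList L).get ⟨a.1, hla⟩).1 := by
      simp [List.get_eq_getElem, List.getElem_map]
    have h2 : ((dualList L).map Prod.fst).get b = ((dualList L).get ⟨b.1, hlb⟩).1 := by
      simp [List.get_eq_getElem, List.getElem_map]
    rw [h1, h2, dualList_get, dualList_get] at hab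
    have := succIdx_inj (snd_inj hexp hab)
    have hv := congrArg Fin.val this
    exact Fin.ext hv
  · intro p hp
    obtain ⟨j, hj⟩ := List.mem_iff_get.mp hp
    rw [← hj, dualList_get]
    exact elim_symm_get hexp _
  · intro j
    set i := Fin.cast (dualList_length L) j with hidef
    have hgj : (dualList L).get j = ((L.get (succIdx L i)).2, (L.get i).1) := dualList_get j
    have hsucc : (dualList L).get ⟨(j.1 + 1) % (dualList L).length,
        Nat.mod_lt _ j.pos⟩
        = ((L.get (succIdx L (succIdx L i))).2, (L.get (succIdx L i)).1) := by
      have he : (⟨(j.1 + 1) % (dualList L).length, Nat.mod_lt _ j.pos⟩ :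
          Fin (dualList L).length) = succIdx (dualList L) j := rfl
      rw [he, dualList_get, succIdx_cast]
    rw [hgj, hsucc]
    have hMsymm : M.symm (L.get (succIdx L i)).2 = (L.get (succIdx L i)).1 := by
      rw [← exposed_pair_s6 hexp (succIdx L i), Equiv.symm_apply_apply]
    refine ⟨?_, ?_, ?_⟩
    · show I.wrank (L.get (succIdx L i)).2 (L.get i).1 <
        I.wrank (L.get (succIdx L i)).2 (L.get (succIdx L i)).1
      exact (hexp.2.2.2 i).2.1
    · show I.mrank (L.get (succIdx L i)).1 (L.get (succIdx L i)).2 <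
        I.mrank (L.get (succIdx L i)).1 (L.get (succIdx L (succIdx L i))).2
      exact (hexp.2.2.2 (succIdx L i)).1
    · intro p hp1' hp2' hc'
      have hp1 : I.wrank (L.get (succIdx L i)).2 (L.get i).1 <
          I.wrank (L.get (succIdx L i)).2 p := hp1'
      have hp2 : I.wrank (L.get (succIdx L i)).2 p <
          I.wrank (L.get (succIdx L i)).2 (L.get (succIdx L i)).1 := hp2'
      have hc : I.mrank p (L.get (succIdx L i)).2 < I.mrank p (elimMatch M L p) := by
        have : ((elimMatch M L).symm).symm p = elimMatch M L p := by
          rw [Equiv.symm_symm]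
        exact this ▸ hc'
      clear hp1' hp2' hc'
      set w₁ := (L.get (succIdx L i)).2 with hw₁
      set m₁ := (L.get (succIdx L i)).1 with hm₁
      have hpm1 : p ≠ m₁ := by
        intro h; rw [h] at hp2; exact lt_irrefl _ hp2
      by_cases hpmem : p ∈ L.map Prod.fst
      · obtain ⟨q, hq, hqe⟩ := List.mem_map.mp hpmem
        obtain ⟨t, ht⟩ := List.mem_iff_get.mp hq
        have hpt : (L.get t).1 = p := by rw [ht]; exact hqe
        have helim : elimMatch M L p = (L.get (succIdx L t)).2 := by
          rw [← hpt]; exact elim_get hexp t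
        rw [helim] at hc
        have hMp : M p = (L.get t).2 := by rw [← hpt]; exact exposed_pair_s6 hexp t
        rcases lt_trichotomy (I.mrank p w₁) (I.mrank p (L.get t).2) with hlt | heq | hgt
        · exact hM p w₁ ⟨by rwa [hMp], by rwa [hMsymm]⟩
        · have he2 : w₁ = (L.get t).2 := I.mrank_inj p heq
          have he3 : succIdx L i = t := snd_inj hexp (by rw [← he2])
          exact hpm1 (by rw [hm₁, he3, hpt])
        · have h3 := (hexp.2.2.2 t).2.2 w₁
          rw [hpt] at h3
          exact h3 hgt hc (by rwa [hMsymm])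
      · rw [elim_not_mem hexp hpmem] at hc
        exact hM p w₁ ⟨hc, by rwa [hMsymm]⟩

end SMInst

namespace SMInst

variable {n : ℕ} {I : SMInst n}

lemma dualList_get_inv {L : List (Fin n × Fin n)} (i : Fin L.length) :
    (dualList L).get (Fin.cast (dualList_length L).symm i)
      = ((L.get (succIdx L i)).2, (L.get i).1) :=
  dualList_get _

lemma dualList_get_inv_succ {L : List (Fin n × Fin n)} (i : Fin L.length) :
    (dualList L).get (succIdx (dualList L) (Fin.cast (dualList_length L).symm i))
      = ((L.get (succIdx L (succIdx L i))).2, (L.get (succIdx L i)).1) := by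
  rw [dualList_get, succIdx_cast]
  rfl

/-- The crucial step: two rotations exposed in stable matchings sharing a pair have the
same successor pair. -/
lemma step {M M' : Fin n ≃ Fin n} {L L' : List (Fin n × Fin n)}
    (hM : I.IsStable M) (hL : I.ExposedIn M L)
    (hM' : I.IsStable M') (hL' : I.ExposedIn M' L')
    (i : Fin L.length) (i' : Fin L'.length) (hp : L.get i = L'.get i') :
    L.get (succIdx L i) = L'.get (succIdx L' i') := by
  have hA : (L.get (succIdx L i)).2 = (L'.get (succIdx L' i')).2 := by
    rcases lt_trichotomy (I.mrank (L.get i).1 (L.get (succIdx L i)).2)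
      (I.mrank (L.get i).1 (L'.get (succIdx L' i')).2) with hlt | heq | hgt
    · exfalso
      refine no_between hM' hL' i' (elim_stable_s6 hM hL) ?_ ?_
      · rw [← hp, elim_get hL i]
        exact (hL.2.2.2 i).1
      · rw [← hp, elim_get hL i]
        exact hlt
    · exact I.mrank_inj _ heq
    · exfalso
      refine no_between hM hL i (elim_stable_s6 hM' hL') ?_ ?_
      · rw [hp, elim_get hL' i']
        exact (hL'.2.2.2 i').1
      · rw [hp] at hgt
        rw [hp, elim_get hL' i']
        exact hgt
  have hB : (L.get (succIdx L i)).1 = (L'.get (succIdx L' i')).1 := by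
    have hM'w : M' (L'.get (succIdx L' i')).1 = (L.get (succIdx L i)).2 := by
      rw [hA]; exact exposed_pair_s6 hL' (succIdx L' i')
    have hMw : M (L.get (succIdx L i)).1 = (L'.get (succIdx L' i')).2 := by
      rw [← hA]; exact exposed_pair_s6 hL (succIdx L i)
    rcases lt_trichotomy (I.wrank (L.get (succIdx L i)).2 (L.get (succIdx L i)).1)
      (I.wrank (L.get (succIdx L i)).2 (L'.get (succIdx L' i')).1) with hlt | heq | hgt
    · -- m₁ strictly better for w₁: contradict via dual of L'
      exfalso
      refine no_between (I := I.transp)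
        (transp_stable (elim_stable_s6 hM' hL')) (dual_exposed hM' hL')
        (Fin.cast (dualList_length L').symm i') (transp_stable hM) ?_ ?_
      · rw [dualList_get_inv]
        show I.wrank (L'.get (succIdx L' i')).2 (L'.get i').1 <
          I.wrank (L'.get (succIdx L' i')).2 (M.symm (L'.get (succIdx L' i')).2)
        have hs : M.symm (L'.get (succIdx L' i')).2 = (L.get (succIdx L i)).1 := by
          rw [← hMw, Equiv.symm_apply_apply]
        rw [hs, ← hp, ← hA]
        exact (hL.2.2.2 i).2.1
      · rw [dualList_get_inv, dualList_get_inv_succ]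
        show I.wrank (L'.get (succIdx L' i')).2 (M.symm (L'.get (succIdx L' i')).2) <
          I.wrank (L'.get (succIdx L' i')).2 (L'.get (succIdx L' i')).1
        have hs : M.symm (L'.get (succIdx L' i')).2 = (L.get (succIdx L i)).1 := by
          rw [← hMw, Equiv.symm_apply_apply]
        rw [hs, ← hA]
        exact hlt
    · exact I.wrank_inj _ heq
    · -- m₁' strictly better for w₁: contradict via dual of L
      exfalso
      refine no_between (I := I.transp)
        (transp_stable (elim_stable_s6 hM hL)) (dual_exposed hM hL)
        (Fin.cast (dualList_length L).symm i) (transp_stable hM') ?_ ?_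
      · rw [dualList_get_inv]
        show I.wrank (L.get (succIdx L i)).2 (L.get i).1 <
          I.wrank (L.get (succIdx L i)).2 (M'.symm (L.get (succIdx L i)).2)
        have hs : M'.symm (L.get (succIdx L i)).2 = (L'.get (succIdx L' i')).1 := by
          rw [← hM'w, Equiv.symm_apply_apply]
        rw [hs, hp, hA]
        exact (hL'.2.2.2 i').2.1
      · rw [dualList_get_inv, dualList_get_inv_succ]
        show I.wrank (L.get (succIdx L i)).2 (M'.symm (L.get (succIdx L i)).2) <
          I.wrank (L.get (succIdx L i)).2 (L.get (succIdx L i)).1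
        have hs : M'.symm (L.get (succIdx L i)).2 = (L'.get (succIdx L' i')).1 := by
          rw [← hM'w, Equiv.symm_apply_apply]
        rw [hs]
        exact hgt
  exact Prod.ext hB hA

lemma chain {M M' : Fin n ≃ Fin n} {L L' : List (Fin n × Fin n)}
    (hM : I.IsStable M) (hL : I.ExposedIn M L)
    (hM' : I.IsStable M') (hL' : I.ExposedIn M' L')
    (i₀ : Fin L.length) (i₀' : Fin L'.length) (h0 : L.get i₀ = L'.get i₀') :
    ∀ t : ℕ, L.get ⟨(i₀.1 + t) % L.length, Nat.mod_lt _ i₀.pos⟩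
      = L'.get ⟨(i₀'.1 + t) % L'.length, Nat.mod_lt _ i₀'.pos⟩ := by
  intro t
  induction t with
  | zero =>
      have e1 : (⟨(i₀.1 + 0) % L.length, Nat.mod_lt _ i₀.pos⟩ : Fin L.length) = i₀ :=
        Fin.ext (by simp [Nat.mod_eq_of_lt i₀.2])
      have e2 : (⟨(i₀'.1 + 0) % L'.length, Nat.mod_lt _ i₀'.pos⟩ : Fin L'.length) = i₀' :=
        Fin.ext (by simp [Nat.mod_eq_of_lt i₀'.2])
      rw [e1, e2]; exact h0
  | succ t ih =>
      have e1 : succIdx L ⟨(i₀.1 + t) % L.length, Nat.mod_lt _ i₀.pos⟩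
          = ⟨(i₀.1 + (t + 1)) % L.length, Nat.mod_lt _ i₀.pos⟩ :=
        Fin.ext (by show ((i₀.1 + t) % L.length + 1) % L.length = _;
                    rw [Nat.mod_add_mod, Nat.add_assoc])
      have e2 : succIdx L' ⟨(i₀'.1 + t) % L'.length, Nat.mod_lt _ i₀'.pos⟩
          = ⟨(i₀'.1 + (t + 1)) % L'.length, Nat.mod_lt _ i₀'.pos⟩ :=
        Fin.ext (by show ((i₀'.1 + t) % L'.length + 1) % L'.length = _;
                    rw [Nat.mod_add_mod, Nat.add_assoc])
      rw [← e1, ← e2]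
      exact step hM hL hM' hL' _ _ ih

/-- every pair of `L` lies in `L'`. -/
lemma subset_of_common {M M' : Fin n ≃ Fin n} {L L' : List (Fin n × Fin n)}
    (hM : I.IsStable M) (hL : I.ExposedIn M L)
    (hM' : I.IsStable M') (hL' : I.ExposedIn M' L')
    (i₀ : Fin L.length) (i₀' : Fin L'.length) (h0 : L.get i₀ = L'.get i₀')
    (j : Fin L.length) : L.get j ∈ L' := by
  have hc := chain hM hL hM' hL' i₀ i₀' h0 (j.1 + L.length - i₀.1)
  have e : (⟨(i₀.1 + (j.1 + L.length - i₀.1)) % L.length, Nat.mod_lt _ i₀.pos⟩ :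
      Fin L.length) = j := by
    apply Fin.ext
    show (i₀.1 + (j.1 + L.length - i₀.1)) % L.length = j.1
    have h1 : i₀.1 + (j.1 + L.length - i₀.1) = j.1 + L.length := by
      have := i₀.2; omega
    rw [h1, Nat.add_mod_right, Nat.mod_eq_of_lt j.2]
  rw [e] at hc
  rw [hc]
  exact List.get_mem _ _

end SMInst

namespace SMInst

variable {n : ℕ} {I : SMInst n}

lemma rot_toFinset_eq {L L' : List (Fin n × Fin n)}
    (hL : I.IsRotation L) (hL' : I.IsRotation L')
    {p : Fin n × Fin n} (hp : p ∈ L) (hp' : p ∈ L') :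
    L.toFinset = L'.toFinset := by
  classical
  obtain ⟨M, hM, hexp⟩ := hL
  obtain ⟨M', hM', hexp'⟩ := hL'
  obtain ⟨i₀, hi₀⟩ := List.mem_iff_get.mp hp
  obtain ⟨i₀', hi₀'⟩ := List.mem_iff_get.mp hp'
  have h0 : L.get i₀ = L'.get i₀' := by rw [hi₀, hi₀']
  apply Finset.ext
  intro q
  simp only [List.mem_toFinset]
  constructor
  · intro hq
    obtain ⟨j, hj⟩ := List.mem_iff_get.mp hq
    rw [← hj]
    exact subset_of_common hM hexp hM' hexp' i₀ i₀' h0 j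
  · intro hq
    obtain ⟨j, hj⟩ := List.mem_iff_get.mp hq
    rw [← hj]
    exact subset_of_common hM' hexp' hM hexp i₀' i₀ h0.symm j

end SMInst


/-- every man–woman pair appears in at most one rotation, and consequently
there are at most `n(n-1)/2` rotations. -/
theorem pair_in_at_most_one_rotation {n : ℕ} (I : SMInst n) :
    (∀ L L' : List (Fin n × Fin n), I.IsRotation L → I.IsRotation L' →
      ∀ p : Fin n × Fin n, p ∈ L → p ∈ L' → L.toFinset = L'.toFinset) ∧
    I.RotSet.ncard ≤ n * (n - 1) / 2 := by
  classical
  have part1 : ∀ L L' : List (Fin n × Fin n), I.IsRotation L → I.IsRotation L' →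
      ∀ p : Fin n × Fin n, p ∈ L → p ∈ L' → L.toFinset = L'.toFinset :=
    fun L L' hL hL' p hp hp' => SMInst.rot_toFinset_eq hL hL' hp hp'
  refine ⟨part1, ?_⟩
  have hfin : I.RotSet.Finite := Set.toFinite _
  rw [Set.ncard_eq_toFinset_card _ hfin]
  set S := hfin.toFinset with hSdef
  have hmem : ∀ R, R ∈ S → ∃ L, I.IsRotation L ∧ L.toFinset = R := by
    intro R hR
    rw [hSdef, Set.Finite.mem_toFinset] at hR
    exact hR
  -- worst women
  have hworst' : ∀ m : Fin n, ∃ wm : Fin n, ∀ w', I.mrank m w' ≤ I.mrank m wm := by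
    intro m
    obtain ⟨x, -, hx⟩ := Finset.exists_max_image Finset.univ (I.mrank m)
      ⟨m, Finset.mem_univ m⟩
    exact ⟨x, fun w' => hx w' (Finset.mem_univ _)⟩
  choose worst hworst using hworst'
  set good : Finset (Fin n × Fin n) :=
    Finset.univ.filter (fun p => p.2 ≠ worst p.1) with hgood
  have hR2 : ∀ R ∈ S, 2 ≤ R.card := by
    intro R hR
    obtain ⟨L, ⟨M, hM, hexp⟩, hLR⟩ := hmem R hR
    have hnd : L.Nodup := List.Nodup.of_map _ hexp.2.1
    rw [← hLR, List.toFinset_card_of_nodup hnd]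
    exact hexp.1
  have hRgood : ∀ R ∈ S, R ⊆ good := by
    intro R hR p hpR
    obtain ⟨L, ⟨M, hM, hexp⟩, hLR⟩ := hmem R hR
    rw [← hLR, List.mem_toFinset] at hpR
    obtain ⟨i, hi⟩ := List.mem_iff_get.mp hpR
    have h1 := (hexp.2.2.2 i).1
    rw [hi] at h1
    rw [hgood, Finset.mem_filter]
    refine ⟨Finset.mem_univ _, ?_⟩
    intro hbad
    rw [hbad] at h1
    exact absurd (hworst p.1 _) (not_le.mpr h1)
  have hdisj : ∀ R ∈ S, ∀ R' ∈ S, R ≠ R' → Disjoint (id R) (id R') := by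
    intro R hR R' hR' hne
    by_contra hnd
    obtain ⟨p, hp1, hp2⟩ := Finset.not_disjoint_iff.mp hnd
    obtain ⟨L, hLrot, hLR⟩ := hmem R hR
    obtain ⟨L', hLrot', hLR'⟩ := hmem R' hR'
    apply hne
    rw [← hLR, ← hLR']
    exact part1 L L' hLrot hLrot' p
      (by rw [← List.mem_toFinset, hLR]; exact hp1)
      (by rw [← List.mem_toFinset, hLR']; exact hp2)
  have hsum : 2 * S.card ≤ good.card := by
    calc 2 * S.card = ∑ _R ∈ S, 2 := by
          rw [Finset.sum_const, smul_eq_mul, mul_comm]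
      _ ≤ ∑ R ∈ S, R.card := Finset.sum_le_sum hR2
      _ = (S.biUnion id).card := (Finset.card_biUnion hdisj).symm
      _ ≤ good.card := by
          apply Finset.card_le_card
          intro p hp
          obtain ⟨R, hRS, hpR⟩ := Finset.mem_biUnion.mp hp
          exact hRgood R hRS hpR
  have hgoodcard : good.card ≤ n * (n - 1) := by
    have hsub : good ⊆ Finset.univ \ (Finset.univ.image (fun m : Fin n => (m, worst m))) := by
      intro p hp
      rw [hgood, Finset.mem_filter] at hp
      rw [Finset.mem_sdiff]
      refine ⟨Finset.mem_univ _, ?_⟩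
      intro hmemb
      obtain ⟨m, -, hm⟩ := Finset.mem_image.mp hmemb
      apply hp.2
      rw [← hm]
    have hc := Finset.card_le_card hsub
    rw [Finset.card_sdiff_of_subset (Finset.subset_univ _)] at hc
    have himg : (Finset.univ.image (fun m : Fin n => (m, worst m))).card = n := by
      rw [Finset.card_image_of_injective _ (fun a b h => (Prod.ext_iff.mp h).1),
        Finset.card_univ, Fintype.card_fin]
    have huniv : (Finset.univ : Finset (Fin n × Fin n)).card = n * n := by
      rw [Finset.card_univ, Fintype.card_prod, Fintype.card_fin]
    rw [himg, huniv] at hc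
    calc good.card ≤ n * n - n := hc
      _ = n * (n - 1) := by rw [Nat.mul_sub_one]
  rw [Nat.le_div_iff_mul_le (by norm_num : 0 < 2)]
  omega
end
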